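/- arXiv:1208.0433 — 7 statements merged into one kernel-verified Lean document; each statement's English description precedes it below -/
import Mathlib

section
/- Let X be a Banach space, p ∈ [1,∞), τ > 0, and let g : [0,∞) → X be strongly measurable with ∫₀^∞ ‖g(t)‖^p dt < ∞, and such that t ↦ g(τt) f_n(t) is Bochner integrable on [0,∞) for every n ≥ 1, where f_n(t) := t^{n-1} e^{-t}/(n-1)!. Then ∑_{n=1}^∞ τ ‖∫₀^∞ g(τt) f_n(t) dt‖^p ≤ ∫₀^∞ ‖g(t)‖^p dt. -/
/-!
For fixed `t` the weights `tⁿ e^{-t} / n!` are the Poisson probabilities, so they sum to `1`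
over `n`; for fixed `n` they form the Gamma(n+1) probability density in `t`. Jensen's
inequality for that probability measure bounds `‖∫ fₙ(t) g(τt) dt‖^p` by
`∫ fₙ(t) ‖g(τt)‖^p dt`; summing over `n` (Tonelli) leaves
`∫₀^∞ ‖g(τt)‖^p dt = τ⁻¹ ∫₀^∞ ‖g(t)‖^p dt`. The whole estimate is carried out with lower
Lebesgue integrals in `ℝ≥0∞`; only the last step returns to real numbers.
-/

open MeasureTheory Set Real
open scoped ENNReal Nat

section Jensen

variable {α : Type*} [MeasurableSpace α] {μ : Measure α}

theorem rpow_lintegral_le_lintegral_rpow [IsProbabilityMeasure μ] {f : α → ℝ≥0∞}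
    (hf : AEMeasurable f μ) {p : ℝ} (hp : 1 ≤ p) :
    (∫⁻ x, f x ∂μ) ^ p ≤ ∫⁻ x, f x ^ p ∂μ := by
  have h := eLpNorm'_le_eLpNorm'_of_exponent_le one_pos hp μ hf.aestronglyMeasurable
  simp only [eLpNorm', enorm_eq_self, ENNReal.rpow_one, div_one, one_div] at h
  exact (ENNReal.le_rpow_inv_iff (by linarith)).mp h

theorem enorm_integral_smul_rpow_le {E : Type*} [NormedAddCommGroup E] [NormedSpace ℝ E]
    {w : α → ℝ} (hw : AEMeasurable w μ) (hw_nonneg : ∀ᵐ x ∂μ, 0 ≤ w x)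
    (hw_one : ∫⁻ x, ENNReal.ofReal (w x) ∂μ = 1) {f : α → E} (hf : AEStronglyMeasurable f μ)
    {p : ℝ} (hp : 1 ≤ p) :
    ‖∫ x, w x • f x ∂μ‖ₑ ^ p ≤ ∫⁻ x, ENNReal.ofReal (w x) * ‖f x‖ₑ ^ p ∂μ := by
  set ρ := μ.withDensity fun x => ENNReal.ofReal (w x)
  have hd : AEMeasurable (fun x => ENNReal.ofReal (w x)) μ := hw.ennreal_ofReal
  have : IsProbabilityMeasure ρ :=
    ⟨by rw [withDensity_apply _ MeasurableSet.univ, Measure.restrict_univ, hw_one]⟩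
  have hfρ : AEStronglyMeasurable f ρ := hf.mono_ac (withDensity_absolutelyContinuous _ _)
  calc ‖∫ x, w x • f x ∂μ‖ₑ ^ p ≤ (∫⁻ x, ‖w x • f x‖ₑ ∂μ) ^ p := by
        gcongr; exact enorm_integral_le_lintegral_enorm _
    _ = (∫⁻ x, ‖f x‖ₑ ∂ρ) ^ p := by
        rw [lintegral_withDensity_eq_lintegral_mul₀ hd hf.enorm]
        congr 1
        refine lintegral_congr_ae ?_
        filter_upwards [hw_nonneg] with x hx
        rw [enorm_smul, Real.enorm_eq_ofReal hx]
        rfl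
    _ ≤ ∫⁻ x, ‖f x‖ₑ ^ p ∂ρ := rpow_lintegral_le_lintegral_rpow hfρ.enorm hp
    _ = ∫⁻ x, ENNReal.ofReal (w x) * ‖f x‖ₑ ^ p ∂μ :=
        lintegral_withDensity_eq_lintegral_mul₀ hd (hf.enorm.pow_const p)

end Jensen

theorem lintegral_Ioi_comp_mul_left (F : ℝ → ℝ≥0∞) {b : ℝ} (hb : 0 < b) :
    ∫⁻ t in Ioi 0, F (b * t) = ENNReal.ofReal b⁻¹ * ∫⁻ t in Ioi 0, F t := by
  let e : ℝ ≃ᵐ ℝ := (Homeomorph.mulLeft₀ b hb.ne').toMeasurableEquiv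
  have he : e ⁻¹' Ioi 0 = Ioi 0 := by
    show (b * ·) ⁻¹' Ioi 0 = Ioi 0
    simpa using preimage_const_mul_Ioi₀ (0 : ℝ) hb
  calc ∫⁻ t in Ioi 0, F (b * t) = ∫⁻ t in e ⁻¹' Ioi 0, F (e t) := by rw [he]; rfl
    _ = ∫⁻ t, F t ∂(volume.map e).restrict (Ioi 0) := by
        rw [e.restrict_map, lintegral_map_equiv]
    _ = ENNReal.ofReal b⁻¹ * ∫⁻ t in Ioi 0, F t := by
        rw [show ⇑e = (b * ·) from rfl, Real.map_volume_mul_left hb.ne', Measure.restrict_smul,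
          lintegral_smul_measure, abs_of_pos (inv_pos.mpr hb), smul_eq_mul]

theorem tsum_le_of_tsum_ofReal_le {a : ℕ → ℝ} (ha : ∀ n, 0 ≤ a n) {C : ℝ} (hC : 0 ≤ C)
    (h : ∑' n, ENNReal.ofReal (a n) ≤ ENNReal.ofReal C) : ∑' n, a n ≤ C :=
  calc ∑' n, a n = ∑' n, (ENNReal.ofReal (a n)).toReal := by
        simp only [ENNReal.toReal_ofReal (ha _)]
    _ = (∑' n, ENNReal.ofReal (a n)).toReal :=
        (ENNReal.tsum_toReal_eq fun _ => ENNReal.ofReal_ne_top).symm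
    _ ≤ C := ENNReal.toReal_le_of_le_ofReal hC h

theorem integrableOn_pow_mul_exp_neg_Ioi (n : ℕ) :
    IntegrableOn (fun t : ℝ => t ^ n * exp (-t)) (Ioi 0) := by
  simpa [mul_comm] using GammaIntegral_convergent (s := n + 1) (by positivity)

theorem integral_pow_mul_exp_neg_Ioi (n : ℕ) : ∫ t in Ioi (0 : ℝ), t ^ n * exp (-t) = n ! := by
  simpa [mul_comm, Gamma_nat_eq_factorial] using
    (Gamma_eq_integral (s := n + 1) (by positivity)).symm

theorem lintegral_ofReal_pow_mul_exp_neg_div_factorial_Ioi (n : ℕ) :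
    ∫⁻ t in Ioi (0 : ℝ), ENNReal.ofReal (t ^ n * exp (-t) / n !) = 1 := by
  rw [← ofReal_integral_eq_lintegral_ofReal ((integrableOn_pow_mul_exp_neg_Ioi n).div_const _),
    integral_div, integral_pow_mul_exp_neg_Ioi, div_self (by positivity), ENNReal.ofReal_one]
  filter_upwards [ae_restrict_mem measurableSet_Ioi] with t (ht : 0 < t)
  positivity

theorem tsum_ofReal_pow_mul_exp_neg_div_factorial {t : ℝ} (ht : 0 ≤ t) :
    ∑' n : ℕ, ENNReal.ofReal (t ^ n * exp (-t) / n !) = 1 := by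
  have h : HasSum (fun n : ℕ => t ^ n * exp (-t) / n !) 1 := by
    convert ProbabilityTheory.hasSum_one_poissonMeasure t.toNNReal using 2 with n
    rw [Real.coe_toNNReal t ht, mul_comm]
  rw [← ENNReal.ofReal_tsum_of_nonneg (fun n => by positivity) h.summable, h.tsum_eq,
    ENNReal.ofReal_one]

theorem tsum_lintegral_ofReal_pow_mul_exp_neg_div_factorial_mul {F : ℝ → ℝ≥0∞}
    (hF : AEMeasurable F (volume.restrict (Ioi 0))) :
    ∑' n : ℕ, ∫⁻ t in Ioi 0, ENNReal.ofReal (t ^ n * exp (-t) / n !) * F t =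
      ∫⁻ t in Ioi 0, F t := by
  rw [← lintegral_tsum fun n => by fun_prop]
  refine setLIntegral_congr_fun measurableSet_Ioi fun t (ht : 0 < t) => ?_
  rw [ENNReal.tsum_mul_right, tsum_ofReal_pow_mul_exp_neg_div_factorial ht.le, one_mul]

theorem jensen_sum_le_integral_general {X : Type*} [NormedAddCommGroup X] [NormedSpace ℝ X]
    (p : ℝ) (hp : 1 ≤ p) (τ : ℝ) (hτ : 0 < τ) (g : ℝ → X)
    (hg : MeasureTheory.StronglyMeasurable g)
    (hgp : MeasureTheory.IntegrableOn (fun t => ‖g t‖ ^ p) (Set.Ioi 0)) :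
    ∑' n : ℕ,
        τ * ‖∫ t in Set.Ioi (0 : ℝ),
              (t ^ n * Real.exp (-t) / (n.factorial : ℝ)) • g (τ * t)‖ ^ p
      ≤ ∫ t in Set.Ioi (0 : ℝ), ‖g t‖ ^ p := by
  have hgτ : StronglyMeasurable fun t => g (τ * t) := hg.comp_measurable (measurable_const_mul τ)
  have hterm (n : ℕ) :
      ENNReal.ofReal (τ * ‖∫ t in Ioi (0 : ℝ), (t ^ n * exp (-t) / n !) • g (τ * t)‖ ^ p) ≤
        ENNReal.ofReal τ *
          ∫⁻ t in Ioi 0, ENNReal.ofReal (t ^ n * exp (-t) / n !) * ‖g (τ * t)‖ₑ ^ p := by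
    rw [ENNReal.ofReal_mul hτ.le, ← ENNReal.ofReal_rpow_of_nonneg (norm_nonneg _) (by linarith),
      ofReal_norm]
    gcongr
    refine enorm_integral_smul_rpow_le (by fun_prop) ?_
      (lintegral_ofReal_pow_mul_exp_neg_div_factorial_Ioi n) hgτ.aestronglyMeasurable hp
    filter_upwards [ae_restrict_mem measurableSet_Ioi] with t (ht : 0 < t)
    positivity
  have hgp_lintegral : ENNReal.ofReal (∫ t in Ioi 0, ‖g t‖ ^ p) = ∫⁻ t in Ioi 0, ‖g t‖ₑ ^ p := by
    rw [ofReal_integral_eq_lintegral_ofReal hgp (ae_of_all _ fun t => by positivity)]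
    refine lintegral_congr fun t => ?_
    rw [← ENNReal.ofReal_rpow_of_nonneg (norm_nonneg _) (by linarith), ofReal_norm]
  refine tsum_le_of_tsum_ofReal_le (fun n => by positivity) (setIntegral_nonneg measurableSet_Ioi
    fun t _ => by positivity) ?_
  calc _ ≤ ∑' n : ℕ, ENNReal.ofReal τ *
          ∫⁻ t in Ioi 0, ENNReal.ofReal (t ^ n * exp (-t) / n !) * ‖g (τ * t)‖ₑ ^ p :=
        ENNReal.tsum_le_tsum hterm
    _ = ENNReal.ofReal τ * ∫⁻ t in Ioi 0, ‖g (τ * t)‖ₑ ^ p := by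
        rw [ENNReal.tsum_mul_left, tsum_lintegral_ofReal_pow_mul_exp_neg_div_factorial_mul
          (hgτ.enorm.pow_const p).aemeasurable]
    _ = ∫⁻ t in Ioi 0, ‖g t‖ₑ ^ p := by
        rw [lintegral_Ioi_comp_mul_left (fun t => ‖g t‖ₑ ^ p) hτ, ← mul_assoc,
          ← ENNReal.ofReal_mul hτ.le, mul_inv_cancel₀ hτ.ne', ENNReal.ofReal_one, one_mul]
    _ = _ := hgp_lintegral.symm

/-- Jensen-inequality core of Lemma 3(i): if `g : [0,∞) → X` is strongly measurable with
`∫₀^∞ ‖g(t)‖^p dt < ∞` and `t ↦ g(τt) fₙ(t)` is Bochner integrable for every `n ≥ 1`,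
where `fₙ(t) = t^{n-1} e^{-t}/(n-1)!`, then
`∑_{n=1}^∞ τ ‖∫₀^∞ g(τt) fₙ(t) dt‖^p ≤ ∫₀^∞ ‖g(t)‖^p dt`.
(The sum over `n ≥ 1` is reindexed as a sum over `n : ℕ` with `f_{n+1}(t) = tⁿ e^{-t}/n!`.) -/
theorem jensen_sum_le_integral {X : Type*} [NormedAddCommGroup X] [NormedSpace ℝ X]
    [CompleteSpace X]
    (p : ℝ) (hp : 1 ≤ p) (τ : ℝ) (hτ : 0 < τ) (g : ℝ → X)
    (hg : MeasureTheory.StronglyMeasurable g)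
    (hgp : MeasureTheory.IntegrableOn (fun t => ‖g t‖ ^ p) (Set.Ioi 0))
    (hint : ∀ n : ℕ, MeasureTheory.IntegrableOn
      (fun t => (t ^ n * Real.exp (-t) / (n.factorial : ℝ)) • g (τ * t)) (Set.Ioi 0)) :
    ∑' n : ℕ,
        τ * ‖∫ t in Set.Ioi (0 : ℝ),
              (t ^ n * Real.exp (-t) / (n.factorial : ℝ)) • g (τ * t)‖ ^ p
      ≤ ∫ t in Set.Ioi (0 : ℝ), ‖g t‖ ^ p :=
  jensen_sum_le_integral_general p hp τ hτ g hg hgp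
end

section
/- Let H, (e_k), (λ_k), E_A, R_A and (f_k), (μ_k), E_B, R_B be as in the context. Let p ∈ [1,∞), τ > 0, N ≥ 1 and x, y ∈ H, and assume that t ↦ ‖E_B(t)y − E_A(t)x‖^p is integrable on [0,∞). Then τ · ∑_{n=1}^N ‖R_B(τ)^n y − R_A(τ)^n x‖^p ≤ ∫₀^∞ ‖E_B(t)y − E_A(t)x‖^p dt. -/
open MeasureTheory
open scoped RealInnerProductSpace

open ProbabilityTheory Set Real
open scoped ENNReal Nat

/-!
Averaging the semigroup against the Gamma law of shape `n` and rate `1/τ` gives the `n`-th power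
of the resolvent, since `∫ e^{-tλ} dΓ_{n,1/τ}(t) = (1 + τλ)^{-n}`; the differences of the two
orbits therefore satisfy `R_B(τ)ⁿy − R_A(τ)ⁿx = ∫ (E_B(t)y − E_A(t)x) dΓ_{n,1/τ}(t)`, and Jensen's
inequality for `‖·‖^p` bounds the `p`-th power of its norm by the Gamma average of
`‖E_B(t)y − E_A(t)x‖^p`. Finally the Gamma densities satisfy
`τ ∑_{n=1}^N γ_{n,1/τ}(t) = e^{-t/τ} ∑_{k<N} (t/τ)^k / k! ≤ 1` on `[0, ∞)`, so `τ` times the sum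
of these measures is dominated by Lebesgue measure on `[0, ∞)`.
-/

theorem norm_integral_rpow_le_integral_norm_rpow {α E : Type*} [MeasurableSpace α]
    [NormedAddCommGroup E] [NormedSpace ℝ E] {μ : Measure α} [IsProbabilityMeasure μ]
    {g : α → E} {p : ℝ} (hp : 1 ≤ p) (hg : Integrable g μ)
    (hgp : Integrable (fun t => ‖g t‖ ^ p) μ) :
    ‖∫ t, g t ∂μ‖ ^ p ≤ ∫ t, ‖g t‖ ^ p ∂μ :=
  calc ‖∫ t, g t ∂μ‖ ^ p ≤ (∫ t, ‖g t‖ ∂μ) ^ p := by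
        gcongr; exact norm_integral_le_integral_norm _
    _ ≤ ∫ t, ‖g t‖ ^ p ∂μ :=
        (convexOn_rpow hp).map_integral_le
          (continuousOn_id.rpow_const fun _ _ => Or.inr (by linarith))
          isClosed_Ici (ae_of_all _ fun t => norm_nonneg (g t)) hg.norm hgp

theorem abs_exp_neg_mul_le_one {t s : ℝ} (ht : 0 ≤ t) (hs : 0 ≤ s) : |exp (-t * s)| ≤ 1 := by
  rw [abs_of_pos (exp_pos _), exp_le_one_iff, neg_mul, neg_nonpos]
  exact mul_nonneg ht hs

theorem ae_nonneg_gammaMeasure (a r : ℝ) : ∀ᵐ t ∂gammaMeasure a r, 0 ≤ t := by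
  rw [ae_iff]
  simp only [not_le]
  change gammaMeasure a r (Iio 0) = 0
  rw [gammaMeasure, withDensity_apply _ measurableSet_Iio]
  exact lintegral_gammaPDF_of_nonpos le_rfl

theorem integral_gammaMeasure {E : Type*} [NormedAddCommGroup E] [NormedSpace ℝ E] {a r : ℝ}
    (ha : 0 < a) (hr : 0 < r) (f : ℝ → E) :
    ∫ t, f t ∂gammaMeasure a r
      = ∫ t in Ioi 0, (r ^ a / Gamma a * t ^ (a - 1) * exp (-(r * t))) • f t := by
  rw [gammaMeasure, integral_withDensity_eq_integral_toReal_smul (f := gammaPDF a r)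
    (measurable_gammaPDFReal a r).ennreal_ofReal (ae_of_all _ fun _ => ENNReal.ofReal_lt_top),
    ← integral_Ici_eq_integral_Ioi,
    ← setIntegral_eq_integral_of_forall_compl_eq_zero fun t ht => ?_]
  · refine setIntegral_congr_fun measurableSet_Ici fun t (ht : 0 ≤ t) => ?_
    rw [gammaPDF, ENNReal.toReal_ofReal (gammaPDFReal_nonneg ha hr t), gammaPDFReal, if_pos ht]
  · rw [gammaPDF_of_neg (not_le.1 ht), ENNReal.toReal_zero, zero_smul]

theorem integral_exp_neg_mul_gammaMeasure {a r s : ℝ} (ha : 0 < a) (hr : 0 < r) (hs : -r < s) :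
    ∫ t, exp (-t * s) ∂gammaMeasure a r = (r / (r + s)) ^ a := by
  have hrs : 0 < r + s := by linarith
  have hexp : ∀ t : ℝ, exp (-(r * t)) * exp (-t * s) = exp (-((r + s) * t)) := fun t => by
    rw [← exp_add]; ring_nf
  rw [integral_gammaMeasure ha hr]
  simp_rw [smul_eq_mul, mul_assoc, hexp]
  rw [integral_const_mul, integral_rpow_mul_exp_neg_mul_Ioi ha hrs, div_rpow hr.le hrs.le, one_div, inv_rpow hrs.le]
  field_simp [(Gamma_pos_of_pos ha).ne']

theorem integral_exp_neg_mul_gammaMeasure_natCast {τ s : ℝ} (hτ : 0 < τ) (hs : 0 ≤ s) {n : ℕ}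
    (hn : n ≠ 0) : ∫ t, exp (-t * s) ∂gammaMeasure n τ⁻¹ = ((1 + τ * s) ^ n)⁻¹ := by
  rw [integral_exp_neg_mul_gammaMeasure (by positivity) (inv_pos.2 hτ) (by linarith [inv_pos.2 hτ]),
    rpow_natCast, ← inv_pow]
  congr 1
  field_simp

theorem gammaPDFReal_natCast_succ {r t : ℝ} (ht : 0 ≤ t) (n : ℕ) :
    gammaPDFReal (n + 1 : ℕ) r t = r * ((r * t) ^ n / n !) * exp (-(r * t)) := by
  rw [gammaPDFReal, if_pos ht, rpow_natCast, Nat.cast_succ, Gamma_nat_eq_factorial,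
    add_sub_cancel_right, rpow_natCast]
  ring

theorem sum_gammaPDFReal_le {r : ℝ} (hr : 0 < r) (N : ℕ) (t : ℝ) :
    ∑ n ∈ Finset.Icc 1 N, gammaPDFReal n r t ≤ r := by
  rcases lt_or_ge t 0 with ht | ht
  · simp [gammaPDFReal, not_le.2 ht, hr.le]
  rw [← Finset.Ico_add_one_right_eq_Icc, Finset.sum_Ico_eq_sum_range, Nat.add_sub_cancel]
  simp_rw [add_comm 1, gammaPDFReal_natCast_succ ht, ← Finset.sum_mul, ← Finset.mul_sum]
  calc r * (∑ n ∈ Finset.range N, (r * t) ^ n / n !) * exp (-(r * t))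
      ≤ r * exp (r * t) * exp (-(r * t)) := by
        gcongr; exact sum_le_exp_of_nonneg (by positivity) N
    _ = r := by rw [mul_assoc, ← exp_add, add_neg_cancel, exp_zero, mul_one]

theorem sum_gammaMeasure_le {r : ℝ} (hr : 0 < r) (N : ℕ) :
    ∑ n ∈ Finset.Icc 1 N, gammaMeasure n r ≤ ENNReal.ofReal r • volume.restrict (Ici 0) := by
  refine Measure.le_intro fun s hs _ => ?_
  simp only [Measure.coe_finsetSum, Finset.sum_apply, gammaMeasure, withDensity_apply _ hs,
    Measure.smul_apply, smul_eq_mul, Measure.restrict_apply hs]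
  have hmeas : ∀ n : ℕ, Measurable (gammaPDF n r) := fun n =>
    (measurable_gammaPDFReal n r).ennreal_ofReal
  rw [← lintegral_finsetSum _ fun n _ => hmeas n, inter_comm, ← Measure.restrict_apply measurableSet_Ici, ← lintegral_indicator_const measurableSet_Ici]
  refine lintegral_mono fun t => ?_
  rcases lt_or_ge t 0 with ht | ht
  · simp [gammaPDF_of_neg ht, ht]
  rw [indicator_of_mem (mem_Ici.2 ht)]
  simp only [gammaPDF]
  rw [← ENNReal.ofReal_sum_of_nonneg fun n hn =>
    gammaPDFReal_nonneg (Nat.cast_pos.2 (Finset.mem_Icc.1 hn).1) hr t]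
  exact ENNReal.ofReal_le_ofReal (sum_gammaPDFReal_le hr N t)

theorem gammaMeasure_le {r : ℝ} (hr : 0 < r) {n : ℕ} (hn : n ≠ 0) :
    gammaMeasure n r ≤ ENNReal.ofReal r • volume.restrict (Ici 0) :=
  le_trans (Finset.single_le_sum (f := fun k : ℕ => gammaMeasure k r) (fun _ _ => Measure.zero_le _)
    (Finset.mem_Icc.2 ⟨Nat.one_le_iff_ne_zero.2 hn, le_rfl⟩)) (sum_gammaMeasure_le hr n)

theorem mul_sum_integral_gammaMeasure_le {τ : ℝ} (hτ : 0 < τ) (N : ℕ) {h : ℝ → ℝ}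
    (h_nonneg : ∀ t, 0 ≤ h t) (hh : IntegrableOn h (Ici 0)) :
    τ * ∑ n ∈ Finset.Icc 1 N, ∫ t, h t ∂gammaMeasure n τ⁻¹ ≤ ∫ t in Ici 0, h t := by
  have hle := sum_gammaMeasure_le (inv_pos.2 hτ) N
  have hh' : Integrable h (ENNReal.ofReal τ⁻¹ • volume.restrict (Ici 0)) :=
    hh.smul_measure ENNReal.ofReal_ne_top
  calc τ * ∑ n ∈ Finset.Icc 1 N, ∫ t, h t ∂gammaMeasure n τ⁻¹
      = τ * ∫ t, h t ∂(∑ n ∈ Finset.Icc 1 N, gammaMeasure n τ⁻¹) := by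
        rw [integral_finsetSum_measure (integrable_finsetSum_measure.1 (hh'.mono_measure hle))]
    _ ≤ τ * ∫ t, h t ∂(ENNReal.ofReal τ⁻¹ • volume.restrict (Ici 0)) :=
        mul_le_mul_of_nonneg_left (integral_mono_measure hle (ae_of_all _ h_nonneg) hh') hτ.le
    _ = ∫ t in Ici 0, h t := by
        rw [integral_smul_measure, ENNReal.toReal_ofReal (inv_pos.2 hτ).le, smul_eq_mul,
          ← mul_assoc, mul_inv_cancel₀ hτ.ne', one_mul]

theorem ae_abs_exp_neg_mul_le_one_gammaMeasure {ι : Type*} {lam : ι → ℝ} (hlam : ∀ i, 0 ≤ lam i)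
    (a r : ℝ) : ∀ᵐ t ∂gammaMeasure a r, ∀ i, |exp (-t * lam i)| ≤ 1 :=
  (ae_nonneg_gammaMeasure a r).mono fun _ ht i => abs_exp_neg_mul_le_one ht (hlam i)

namespace HilbertBasis

variable {ι H : Type*} [NormedAddCommGroup H] [InnerProductSpace ℝ H]

/-- `∑'` is `0` on a divergent series; for `|m i| ≤ 1` the series converges (`hasSum_diagonal`). -/
noncomputable def diagonal (b : HilbertBasis ι ℝ H) (m : ι → ℝ) (v : H) : H :=
  ∑' i, (m i * ⟪b i, v⟫) • b i

section Contraction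

variable (b : HilbertBasis ι ℝ H) {m : ι → ℝ} (v : H)

theorem memℓp_mul_inner (hm : ∀ i, |m i| ≤ 1) : Memℓp (fun i => m i * ⟪b i, v⟫) 2 :=
  (lp.memℓp (b.repr v)).mono' fun i => by
    rw [b.repr_apply_apply, norm_mul, Real.norm_eq_abs]
    exact mul_le_of_le_one_left (norm_nonneg _) (hm i)

theorem diagonal_eq_repr_symm (hm : ∀ i, |m i| ≤ 1) :
    b.diagonal m v = b.repr.symm ⟨_, b.memℓp_mul_inner v hm⟩ :=
  (b.hasSum_repr_symm ⟨_, b.memℓp_mul_inner v hm⟩).tsum_eq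

theorem inner_diagonal (hm : ∀ i, |m i| ≤ 1) (i : ι) :
    ⟪b i, b.diagonal m v⟫ = m i * ⟪b i, v⟫ := by
  rw [← b.repr_apply_apply, b.diagonal_eq_repr_symm v hm, LinearIsometryEquiv.apply_symm_apply]

theorem norm_diagonal_le (hm : ∀ i, |m i| ≤ 1) : ‖b.diagonal m v‖ ≤ ‖v‖ := by
  rw [b.diagonal_eq_repr_symm v hm, LinearIsometryEquiv.norm_map, ← b.repr.norm_map v]
  refine lp.norm_mono two_ne_zero fun i => ?_
  show ‖m i * ⟪b i, v⟫‖ ≤ ‖b.repr v i‖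
  rw [b.repr_apply_apply, norm_mul, Real.norm_eq_abs]
  exact mul_le_of_le_one_left (norm_nonneg _) (hm i)

theorem hasSum_diagonal (hm : ∀ i, |m i| ≤ 1) :
    HasSum (fun i => (m i * ⟪b i, v⟫) • b i) (b.diagonal m v) :=
  b.diagonal_eq_repr_symm v hm ▸ b.hasSum_repr_symm _

theorem ext_inner {u w : H} (h : ∀ i, ⟪b i, u⟫ = ⟪b i, w⟫) : u = w :=
  b.repr.injective <| lp.ext <| funext fun i => by simpa only [b.repr_apply_apply] using h i

end Contraction

section Integral

variable {α : Type*} [MeasurableSpace α] {μ : Measure α} (b : HilbertBasis ι ℝ H)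
  {m : ι → α → ℝ} (v : H)

theorem aestronglyMeasurable_diagonal [Countable ι] (hmeas : ∀ i, Measurable (m i))
    (hm : ∀ᵐ t ∂μ, ∀ i, |m i t| ≤ 1) :
    AEStronglyMeasurable (fun t => b.diagonal (fun i => m i t) v) μ := by
  refine aestronglyMeasurable_of_tendsto_ae Filter.atTop
    (f := fun s t => ∑ i ∈ s, (m i t * ⟪b i, v⟫) • b i) (fun s => ?_) ?_
  · exact Finset.aestronglyMeasurable_fun_sum _ fun i _ =>
      (((hmeas i).mul_const _).stronglyMeasurable.smul_const _).aestronglyMeasurable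
  · filter_upwards [hm] with t ht using b.hasSum_diagonal v ht

theorem integrable_diagonal [Countable ι] [IsFiniteMeasure μ] (hmeas : ∀ i, Measurable (m i))
    (hm : ∀ᵐ t ∂μ, ∀ i, |m i t| ≤ 1) :
    Integrable (fun t => b.diagonal (fun i => m i t) v) μ :=
  Integrable.of_bound (b.aestronglyMeasurable_diagonal v hmeas hm) ‖v‖ <| by
    filter_upwards [hm] with t ht using b.norm_diagonal_le v ht

theorem integral_diagonal [Countable ι] [IsProbabilityMeasure μ] [CompleteSpace H]
    (hmeas : ∀ i, Measurable (m i)) (hm : ∀ᵐ t ∂μ, ∀ i, |m i t| ≤ 1) :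
    ∫ t, b.diagonal (fun i => m i t) v ∂μ = b.diagonal (fun i => ∫ t, m i t ∂μ) v := by
  have hint_le : ∀ i, |∫ t, m i t ∂μ| ≤ 1 := fun i => by
    simpa using norm_integral_le_of_norm_le_const (C := 1) (μ := μ) (f := m i)
      (by filter_upwards [hm] with t ht using ht i)
  refine b.ext_inner fun i => ?_
  rw [← integral_inner (b.integrable_diagonal v hmeas hm), b.inner_diagonal v hint_le,
    ← integral_mul_const]
  exact integral_congr_ae <| by filter_upwards [hm] with t ht using b.inner_diagonal v ht i

end Integral

theorem integrable_diagonal_exp_gammaMeasure [Countable ι] (b : HilbertBasis ι ℝ H) (v : H)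
    {lam : ι → ℝ} (hlam : ∀ i, 0 ≤ lam i) {a r : ℝ} (ha : 0 < a) (hr : 0 < r) :
    Integrable (fun t => b.diagonal (fun i => exp (-t * lam i)) v) (gammaMeasure a r) :=
  have := isProbabilityMeasure_gammaMeasure ha hr
  b.integrable_diagonal v (m := fun i t => exp (-t * lam i)) (fun i => by fun_prop)
    (ae_abs_exp_neg_mul_le_one_gammaMeasure hlam a r)

theorem diagonal_inv_one_add_mul_pow_eq_integral [Countable ι] [CompleteSpace H]
    (b : HilbertBasis ι ℝ H) (v : H) {lam : ι → ℝ} (hlam : ∀ i, 0 ≤ lam i) {τ : ℝ}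
    (hτ : 0 < τ) {n : ℕ} (hn : n ≠ 0) :
    b.diagonal (fun i => ((1 + τ * lam i) ^ n)⁻¹) v
      = ∫ t, b.diagonal (fun i => exp (-t * lam i)) v ∂gammaMeasure n τ⁻¹ := by
  have := isProbabilityMeasure_gammaMeasure (Nat.cast_pos.2 (Nat.pos_of_ne_zero hn)) (inv_pos.2 hτ)
  rw [b.integral_diagonal v (m := fun i t => exp (-t * lam i)) (fun i => by fun_prop)
    (ae_abs_exp_neg_mul_le_one_gammaMeasure hlam _ _)]
  simp_rw [integral_exp_neg_mul_gammaMeasure_natCast hτ (hlam _) hn]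

end HilbertBasis

theorem euler_lemma_sum_general {H : Type*} [NormedAddCommGroup H] [InnerProductSpace ℝ H]
    [CompleteSpace H]
    (e f : HilbertBasis ℕ ℝ H) (lam mu : ℕ → ℝ)
    (hlam_pos : ∀ k, 0 < lam k)
    (hmu_pos : ∀ k, 0 < mu k)
    (EA EB : ℝ → H → H) (RA RB : ℝ → ℕ → H → H)
    (hEA : ∀ t v, EA t v = ∑' k, (Real.exp (-t * lam k) * ⟪e k, v⟫) • e k)
    (hEB : ∀ t v, EB t v = ∑' k, (Real.exp (-t * mu k) * ⟪f k, v⟫) • f k)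
    (hRA : ∀ τ n v, RA τ n v = ∑' k, (((1 + τ * lam k) ^ n)⁻¹ * ⟪e k, v⟫) • e k)
    (hRB : ∀ τ n v, RB τ n v = ∑' k, (((1 + τ * mu k) ^ n)⁻¹ * ⟪f k, v⟫) • f k)
    (p : ℝ) (hp : 1 ≤ p) (τ : ℝ) (hτ : 0 < τ) (N : ℕ) (x y : H)
    (hint : MeasureTheory.IntegrableOn (fun t => ‖EB t y - EA t x‖ ^ p) (Set.Ici 0)) :
    τ * ∑ n ∈ Finset.Icc 1 N, ‖RB τ n y - RA τ n x‖ ^ p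
      ≤ ∫ t in Set.Ici (0 : ℝ), ‖EB t y - EA t x‖ ^ p := by
  have hEA' : EA = fun t v => e.diagonal (fun k => exp (-t * lam k)) v := funext₂ hEA
  have hEB' : EB = fun t v => f.diagonal (fun k => exp (-t * mu k)) v := funext₂ hEB
  have hRA' : RA = fun τ n v => e.diagonal (fun k => ((1 + τ * lam k) ^ n)⁻¹) v := funext₃ hRA
  have hRB' : RB = fun τ n v => f.diagonal (fun k => ((1 + τ * mu k) ^ n)⁻¹) v := funext₃ hRB
  have hlam : ∀ k, 0 ≤ lam k := fun k => (hlam_pos k).le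
  have hmu : ∀ k, 0 ≤ mu k := fun k => (hmu_pos k).le
  have hjensen : ∀ n ∈ Finset.Icc 1 N, ‖RB τ n y - RA τ n x‖ ^ p
      ≤ ∫ t, ‖EB t y - EA t x‖ ^ p ∂gammaMeasure n τ⁻¹ := by
    intro n hn
    have hn0 : n ≠ 0 := Nat.one_le_iff_ne_zero.1 (Finset.mem_Icc.1 hn).1
    have := isProbabilityMeasure_gammaMeasure (a := n) (by positivity) (inv_pos.2 hτ)
    have hA := e.integrable_diagonal_exp_gammaMeasure x hlam (a := n) (by positivity) (inv_pos.2 hτ)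
    have hB := f.integrable_diagonal_exp_gammaMeasure y hmu (a := n) (by positivity) (inv_pos.2 hτ)
    simp only [hEA', hEB', hRA', hRB'] at hint ⊢
    rw [e.diagonal_inv_one_add_mul_pow_eq_integral x hlam hτ hn0,
      f.diagonal_inv_one_add_mul_pow_eq_integral y hmu hτ hn0, ← integral_sub hB hA]
    exact norm_integral_rpow_le_integral_norm_rpow hp (hB.sub hA)
      ((hint.smul_measure ENNReal.ofReal_ne_top).mono_measure (gammaMeasure_le (inv_pos.2 hτ) hn0))
  calc τ * ∑ n ∈ Finset.Icc 1 N, ‖RB τ n y - RA τ n x‖ ^ p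
      ≤ τ * ∑ n ∈ Finset.Icc 1 N, ∫ t, ‖EB t y - EA t x‖ ^ p ∂gammaMeasure n τ⁻¹ :=
        mul_le_mul_of_nonneg_left (Finset.sum_le_sum hjensen) hτ.le
    _ ≤ ∫ t in Set.Ici (0 : ℝ), ‖EB t y - EA t x‖ ^ p :=
        mul_sum_integral_gammaMeasure_le hτ N (fun t => by positivity) hint

/-- Lemma 3(i) in the self-adjoint diagonal setting:
`τ ∑_{n=1}^N ‖R_B(τ)ⁿ y − R_A(τ)ⁿ x‖^p ≤ ∫₀^∞ ‖E_B(t)y − E_A(t)x‖^p dt`. -/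
theorem euler_lemma_sum {H : Type*} [NormedAddCommGroup H] [InnerProductSpace ℝ H]
    [CompleteSpace H]
    (e f : HilbertBasis ℕ ℝ H) (lam mu : ℕ → ℝ)
    (hlam_pos : ∀ k, 0 < lam k) (hlam_mono : Monotone lam)
    (hlam_top : Filter.Tendsto lam Filter.atTop Filter.atTop)
    (hmu_pos : ∀ k, 0 < mu k) (hmu_mono : Monotone mu)
    (hmu_top : Filter.Tendsto mu Filter.atTop Filter.atTop)
    (EA EB : ℝ → H → H) (RA RB : ℝ → ℕ → H → H)
    (hEA : ∀ t v, EA t v = ∑' k, (Real.exp (-t * lam k) * ⟪e k, v⟫) • e k)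
    (hEB : ∀ t v, EB t v = ∑' k, (Real.exp (-t * mu k) * ⟪f k, v⟫) • f k)
    (hRA : ∀ τ n v, RA τ n v = ∑' k, (((1 + τ * lam k) ^ n)⁻¹ * ⟪e k, v⟫) • e k)
    (hRB : ∀ τ n v, RB τ n v = ∑' k, (((1 + τ * mu k) ^ n)⁻¹ * ⟪f k, v⟫) • f k)
    (p : ℝ) (hp : 1 ≤ p) (τ : ℝ) (hτ : 0 < τ) (N : ℕ) (hN : 1 ≤ N) (x y : H)
    (hint : MeasureTheory.IntegrableOn (fun t => ‖EB t y - EA t x‖ ^ p) (Set.Ici 0)) :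
    τ * ∑ n ∈ Finset.Icc 1 N, ‖RB τ n y - RA τ n x‖ ^ p
      ≤ ∫ t in Set.Ici (0 : ℝ), ‖EB t y - EA t x‖ ^ p :=
  euler_lemma_sum_general e f lam mu hlam_pos hmu_pos EA EB RA RB hEA hEB hRA hRB p hp τ hτ N x y
    hint
end

section
/- Let H, (e_k), (λ_k), E, R, ‖·‖_s be as in the context. For every β ∈ [0,2] there exists a constant C such that for all τ > 0, all integers n ≥ 1 and all v ∈ H with ‖v‖_β < ∞, ‖E(nτ)v − R(τ)^n v‖ ≤ C τ^{β/2} ‖v‖_β. -/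
open scoped RealInnerProductSpace

lemma aux_pow_sub (a b c : ℝ) (hb : 0 ≤ b) (hba : b ≤ a) (hc : 0 ≤ c)
    (habc : a - b ≤ c * a) : ∀ n : ℕ, a ^ n - b ^ n ≤ n * c * a ^ n := by
  intro n
  induction n with
  | zero => simp
  | succ n ih =>
    have ha : 0 ≤ a := hb.trans hba
    have hbn : b ^ n ≤ a ^ n := pow_le_pow_left₀ hb hba n
    have hbn0 : 0 ≤ b ^ n := pow_nonneg hb n
    have h2 : a * (a ^ n - b ^ n) ≤ a * (n * c * a ^ n) :=
      mul_le_mul_of_nonneg_left ih ha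
    have h3 : (a - b) * b ^ n ≤ (c * a) * a ^ n :=
      mul_le_mul habc hbn hbn0 (mul_nonneg hc ha)
    have h4 : a ^ (n+1) - b ^ (n+1) = a * (a ^ n - b ^ n) + (a - b) * b ^ n := by ring
    have h7 : a * (↑n * c * a ^ n) + c * a * a ^ n = ((n:ℝ) + 1) * c * a ^ (n+1) := by
      ring
    push_cast
    linarith

lemma aux_scalar (x : ℝ) (hx : 0 < x) (n : ℕ) (hn : 1 ≤ n) :
    |Real.exp (-(n * x)) - ((1 + x) ^ n)⁻¹| ≤ min 1 x := by
  have h1x : (0:ℝ) < 1 + x := by linarith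
  set a := (1 + x)⁻¹ with ha
  set b := Real.exp (-x) with hb
  have ha0 : 0 ≤ a := by positivity
  have hb0 : 0 ≤ b := (Real.exp_pos _).le
  have hba : b ≤ a := by
    rw [hb, ha, Real.exp_neg]
    exact inv_anti₀ (by linarith) (by linarith [Real.add_one_le_exp x])
  have ha1 : a ≤ 1 := by
    rw [ha, inv_le_one_iff₀]; right; linarith
  have hexp : Real.exp (-(n * x)) = b ^ n := by
    rw [hb, ← Real.exp_nat_mul]; ring_nf
  have hinv : ((1 + x) ^ n)⁻¹ = a ^ n := by rw [ha, inv_pow]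
  have hpowle : b ^ n ≤ a ^ n := pow_le_pow_left₀ hb0 hba n
  rw [hexp, hinv, abs_sub_comm, abs_of_nonneg (by linarith)]
  refine le_min ?_ ?_
  · have := pow_le_one₀ ha0 ha1 (n := n)
    have := pow_nonneg hb0 n
    linarith
  · -- a - b ≤ x^2 * a
    have h1b : 1 - x ≤ b := by
      have := Real.add_one_le_exp (-x); rw [hb]; linarith
    have habc : a - b ≤ x ^ 2 * a := by
      have : a - (1 - x) = x ^ 2 * a := by
        rw [ha]; field_simp; ring
      linarith
    have hkey := aux_pow_sub a b (x ^ 2) hb0 hba (by positivity) habc n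
    -- n * x ≤ (1+x)^n
    have hbern : (n : ℝ) * x ≤ (1 + x) ^ n := by
      have := one_add_mul_le_pow (a := x) (by linarith) n
      nlinarith
    have hP : (0:ℝ) < (1 + x) ^ n := pow_pos h1x n
    have han : a ^ n = ((1 + x) ^ n)⁻¹ := by rw [ha, inv_pow]
    have hfin : (n : ℝ) * x ^ 2 * a ^ n ≤ x := by
      rw [han, mul_inv_le_iff₀ hP]
      have hn1 : (1:ℝ) ≤ (n : ℝ) := by exact_mod_cast hn
      nlinarith
    linarith

lemma aux_min_rpow (x : ℝ) (hx : 0 < x) (β : ℝ) (hβ0 : 0 ≤ β) (hβ2 : β ≤ 2) :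
    min 1 x ≤ x ^ (β / 2) := by
  rcases le_or_gt x 1 with h | h
  · calc min 1 x ≤ x := min_le_right _ _
    _ = x ^ (1:ℝ) := (Real.rpow_one x).symm
    _ ≤ x ^ (β/2) := Real.rpow_le_rpow_of_exponent_ge hx h (by linarith)
  · calc min 1 x ≤ 1 := min_le_left _ _
    _ ≤ x ^ (β/2) := Real.one_le_rpow h.le (by linarith)

/-- Deterministic Euler error estimate (4.5) in the diagonal setting: for `β ∈ [0,2]` there
is `C` such that `‖E(nτ)v − R(τ)ⁿ v‖ ≤ C τ^{β/2} ‖v‖_β` for `τ > 0`, `n ≥ 1`,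
where `‖v‖_β = ‖A^{β/2}v‖ = (∑_k λ_k^β ⟨v,e_k⟩²)^{1/2}`. -/
theorem euler_smooth_error {H : Type*} [NormedAddCommGroup H] [InnerProductSpace ℝ H]
    [CompleteSpace H]
    (e : HilbertBasis ℕ ℝ H) (lam : ℕ → ℝ)
    (hpos : ∀ k, 0 < lam k) (hmono : Monotone lam)
    (htop : Filter.Tendsto lam Filter.atTop Filter.atTop)
    (E : ℝ → H → H) (R : ℝ → ℕ → H → H)
    (hE : ∀ t v, E t v = ∑' k, (Real.exp (-t * lam k) * ⟪e k, v⟫) • e k)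
    (hR : ∀ τ n v, R τ n v = ∑' k, (((1 + τ * lam k) ^ n)⁻¹ * ⟪e k, v⟫) • e k)
    (β : ℝ) (hβ0 : 0 ≤ β) (hβ2 : β ≤ 2) :
    ∃ C : ℝ, 0 < C ∧ ∀ τ : ℝ, 0 < τ → ∀ n : ℕ, 1 ≤ n → ∀ v : H,
      Summable (fun k => lam k ^ β * ⟪e k, v⟫ ^ 2) →
      ‖E (n * τ) v - R τ n v‖
        ≤ C * τ ^ (β / 2) * Real.sqrt (∑' k, lam k ^ β * ⟪e k, v⟫ ^ 2) := by
  refine ⟨1, one_pos, ?_⟩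
  intro τ hτ n hn v hsum
  set a : ℕ → ℝ := fun k => ⟪e k, v⟫ with ha
  -- square-summability of the coefficients of v
  have hasq : Summable (fun k => a k ^ 2) := by
    have := e.orthonormal.inner_products_summable (x := v)
    simpa [ha, Real.norm_eq_abs, sq_abs] using this
  set F : ℕ → ℝ := fun k => Real.exp (-(↑n * τ) * lam k) * a k with hF
  set G : ℕ → ℝ := fun k => ((1 + τ * lam k) ^ n)⁻¹ * a k with hG
  have hFabs : ∀ k, |F k| ≤ |a k| := by
    intro k
    rw [hF, abs_mul]
    have h1 : Real.exp (-(↑n * τ) * lam k) ≤ 1 := by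
      rw [Real.exp_le_one_iff]
      have : (0:ℝ) ≤ (n:ℝ) * τ * lam k :=
        mul_nonneg (mul_nonneg (Nat.cast_nonneg n) hτ.le) (hpos k).le
      nlinarith
    have h0 : 0 ≤ Real.exp (-(↑n * τ) * lam k) := (Real.exp_pos _).le
    calc |Real.exp (-(↑n * τ) * lam k)| * |a k| ≤ 1 * |a k| := by
          apply mul_le_mul_of_nonneg_right _ (abs_nonneg _)
          rw [abs_of_nonneg h0]; exact h1
      _ = |a k| := one_mul _
  have hGabs : ∀ k, |G k| ≤ |a k| := by
    intro k
    rw [hG, abs_mul]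
    have h1x : (1:ℝ) ≤ 1 + τ * lam k := by nlinarith [mul_pos hτ (hpos k)]
    have h1 : ((1 + τ * lam k) ^ n)⁻¹ ≤ 1 := by
      rw [inv_le_one_iff₀]; right; exact one_le_pow₀ h1x
    have h0 : (0:ℝ) ≤ ((1 + τ * lam k) ^ n)⁻¹ :=
      inv_nonneg.mpr (pow_nonneg (by linarith) n)
    calc |((1 + τ * lam k) ^ n)⁻¹| * |a k| ≤ 1 * |a k| := by
          apply mul_le_mul_of_nonneg_right _ (abs_nonneg _)
          rw [abs_of_nonneg h0]; exact h1
      _ = |a k| := one_mul _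
  -- summability of the two series
  have hsummable : ∀ (f : ℕ → ℝ), (∀ k, |f k| ≤ |a k|) → Summable (fun k => f k • e k) := by
    intro f hf
    have : Summable (fun k => ‖f k‖ ^ 2) := by
      apply Summable.of_nonneg_of_le (fun k => by positivity) _ hasq
      intro k
      rw [Real.norm_eq_abs, ← sq_abs (a k)]
      exact pow_le_pow_left₀ (abs_nonneg _) (hf k) 2
    have h := (e.orthonormal.orthogonalFamily.summable_iff_norm_sq_summable f).mpr this
    simpa only [LinearIsometry.toSpanSingleton_apply] using h
  have hFsum : Summable (fun k => F k • e k) := hsummable F hFabs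
  have hGsum : Summable (fun k => G k • e k) := hsummable G hGabs
  have hEhas : HasSum (fun k => F k • e k) (E (↑n * τ) v) := by
    rw [hE]; exact hFsum.hasSum
  have hRhas : HasSum (fun k => G k • e k) (R τ n v) := by
    rw [hR]; exact hGsum.hasSum
  set c : ℕ → ℝ := fun k => F k - G k with hc
  have hDhas : HasSum (fun k => c k • e k) (E (↑n * τ) v - R τ n v) := by
    have h := hEhas.sub hRhas
    have h2 : (fun k => F k • e k - G k • e k) = fun k => c k • e k := by
      funext k; rw [hc, sub_smul]
    rwa [h2] at h
  set D := E (↑n * τ) v - R τ n v with hD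
  -- inner products of D with basis vectors
  have hinner : ∀ j, ⟪e j, D⟫ = c j := by
    intro j
    have hortho := orthonormal_iff_ite.mp e.orthonormal
    have h1 := hDhas.mapL (innerSL ℝ (e j))
    have h2 : (fun k => (innerSL ℝ (e j)) (c k • e k)) =
        fun k => if k = j then c j else 0 := by
      funext k
      rw [innerSL_apply_apply, real_inner_smul_right, hortho j k]
      rcases eq_or_ne k j with rfl | hkj
      · simp
      · simp [hkj, Ne.symm hkj]
    rw [h2] at h1
    exact ((hasSum_ite_eq j (c j)).unique h1).symm
  -- Parseval
  have hnormsq : HasSum (fun j => c j ^ 2) (‖D‖ ^ 2) := by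
    have h := e.hasSum_inner_mul_inner D D
    have h2 : (fun i => ⟪D, e i⟫ * ⟪e i, D⟫) = fun i => c i ^ 2 := by
      funext i
      have h3 : ⟪D, e i⟫ = c i := by rw [real_inner_comm]; exact hinner i
      rw [h3, hinner i]; ring
    rw [h2] at h
    rwa [← real_inner_self_eq_norm_sq]
  -- pointwise bound on c
  have hcb : ∀ j, c j ^ 2 ≤ τ ^ β * (lam j ^ β * a j ^ 2) := by
    intro j
    have hx : 0 < τ * lam j := mul_pos hτ (hpos j)
    have h1 : |c j| ≤ (τ * lam j) ^ (β / 2) * |a j| := by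
      have h2 : |F j - G j| = |Real.exp (-(↑n * (τ * lam j))) -
          ((1 + τ * lam j) ^ n)⁻¹| * |a j| := by
        rw [hF, hG, ← sub_mul, abs_mul]
        ring_nf
      have h3 := (aux_scalar (τ * lam j) hx n hn).trans (aux_min_rpow (τ * lam j) hx β hβ0 hβ2)
      rw [hc, h2]
      exact mul_le_mul_of_nonneg_right h3 (abs_nonneg _)
    have h4 : (τ * lam j) ^ (β / 2) = τ ^ (β / 2) * lam j ^ (β / 2) :=
      Real.mul_rpow hτ.le (hpos j).le
    have h5 : c j ^ 2 ≤ ((τ * lam j) ^ (β / 2) * |a j|) ^ 2 := by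
      rw [← sq_abs (c j)]
      exact pow_le_pow_left₀ (abs_nonneg _) h1 2
    calc c j ^ 2 ≤ ((τ * lam j) ^ (β / 2) * |a j|) ^ 2 := h5
      _ = ((τ * lam j) ^ (β / 2)) ^ 2 * a j ^ 2 := by rw [mul_pow, sq_abs]
      _ = (τ * lam j) ^ β * a j ^ 2 := by
          rw [← Real.rpow_natCast ((τ * lam j) ^ (β / 2)) 2, ← Real.rpow_mul hx.le]
          norm_num
      _ = τ ^ β * (lam j ^ β * a j ^ 2) := by
          rw [Real.mul_rpow hτ.le (hpos j).le]; ring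
  -- sum the bound
  have hrhs : Summable (fun j => τ ^ β * (lam j ^ β * a j ^ 2)) := hsum.mul_left _
  have hDle : ‖D‖ ^ 2 ≤ τ ^ β * ∑' j, lam j ^ β * a j ^ 2 := by
    have := Summable.tsum_le_tsum hcb hnormsq.summable hrhs
    rw [hnormsq.tsum_eq] at this
    rwa [tsum_mul_left] at this
  have hfinal : ‖D‖ ≤ Real.sqrt (τ ^ β * ∑' j, lam j ^ β * a j ^ 2) :=
    Real.le_sqrt_of_sq_le hDle
  have hsq2 : Real.sqrt (τ ^ β) = τ ^ (β / 2) := by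
    rw [Real.sqrt_eq_rpow, ← Real.rpow_mul hτ.le, mul_one_div]
  have hsqrt : Real.sqrt (τ ^ β * ∑' j, lam j ^ β * a j ^ 2)
      = τ ^ (β / 2) * Real.sqrt (∑' j, lam j ^ β * a j ^ 2) := by
    rw [Real.sqrt_mul (Real.rpow_nonneg hτ.le β), hsq2]
  rw [one_mul]
  rw [hsqrt] at hfinal
  exact hfinal
end

section
/- Let H, (e_k), (λ_k), E, R be as in the context. There exists a constant C such that for all τ > 0, all integers n ≥ 1 and all v ∈ H, ‖E(nτ)v − R(τ)^n v‖ ≤ (C/n) ‖v‖ (i.e. ‖[e^{-nτA} − r^n(τA)]v‖ ≤ C τ t_n^{-1} ‖v‖ with t_n = nτ). -/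
open scoped RealInnerProductSpace ENNReal

lemma euler_scalar {x : ℝ} (hx : 0 ≤ x) {n : ℕ} (hn : 1 ≤ n) :
    |Real.exp (-(n * x)) - ((1 + x) ^ n)⁻¹| ≤ 4 / n := by
  have hn0 : (0:ℝ) < n := by exact_mod_cast hn
  have h1x : (0:ℝ) < 1 + x := by linarith
  set a := Real.exp (-x) with ha
  set b := (1 + x)⁻¹ with hb
  have ha0 : 0 < a := Real.exp_pos _
  have hb0 : 0 < b := inv_pos.mpr h1x
  have ha1 : a ≤ 1 := Real.exp_le_one_iff.mpr (by linarith)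
  have hb1 : b ≤ 1 := by rw [hb]; exact inv_le_one_of_one_le₀ (by linarith)
  have hab : a ≤ b := by
    rw [ha, hb, Real.exp_neg]
    exact inv_anti₀ h1x (by linarith [Real.add_one_le_exp x])
  have hba : b - a ≤ x ^ 2 * b := by
    have h2 : 1 - x ≤ a := by have := Real.add_one_le_exp (-x); linarith
    have h3 : b - (1 - x) = x ^ 2 * b := by
      rw [hb]; field_simp; ring
    linarith
  have hexp : Real.exp (-(n * x)) = a ^ n := by
    rw [ha, ← Real.exp_nat_mul]; ring_nf
  have hinv : ((1 + x) ^ n)⁻¹ = b ^ n := by rw [hb, inv_pow]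
  have hpow : a ^ n ≤ b ^ n := pow_le_pow_left₀ ha0.le hab n
  rw [hexp, hinv, abs_sub_comm, abs_of_nonneg (by linarith : (0:ℝ) ≤ b ^ n - a ^ n)]
  -- key inequality  b^n - a^n ≤ n * b^(n-1) * (b-a)
  have hgeom : b ^ n - a ^ n = (∑ i ∈ Finset.range n, b ^ i * a ^ (n - 1 - i)) * (b - a) :=
    (geom_sum₂_mul b a n).symm
  have hsum : (∑ i ∈ Finset.range n, b ^ i * a ^ (n - 1 - i)) ≤ n * b ^ (n - 1) := by
    have := Finset.sum_le_card_nsmul (Finset.range n)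
      (fun i => b ^ i * a ^ (n - 1 - i)) (b ^ (n - 1)) ?_
    · simpa [nsmul_eq_mul] using this
    · intro i hi
      rw [Finset.mem_range] at hi
      have hile : i ≤ n - 1 := Nat.le_sub_one_of_lt hi
      calc b ^ i * a ^ (n - 1 - i) ≤ b ^ i * b ^ (n - 1 - i) := by
            gcongr
        _ = b ^ (n - 1) := by rw [← pow_add, Nat.add_sub_cancel' hile]
  have hmain : b ^ n - a ^ n ≤ n * (x ^ 2 * b ^ n) := by
    calc b ^ n - a ^ n = (∑ i ∈ Finset.range n, b ^ i * a ^ (n - 1 - i)) * (b - a) := hgeom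
      _ ≤ (n * b ^ (n - 1)) * (x ^ 2 * b) := by
          apply mul_le_mul hsum hba (by linarith) (by positivity)
      _ = n * (x ^ 2 * (b ^ (n - 1) * b)) := by ring
      _ = n * (x ^ 2 * b ^ n) := by
          rw [← pow_succ, Nat.sub_add_cancel hn]
  rcases hx.eq_or_lt with h0 | hxpos
  · have h0' : x = 0 := h0.symm
    have hle : b ^ n - a ^ n ≤ 0 := by simpa [h0'] using hmain
    have h4 : (0:ℝ) ≤ 4 / n := by positivity
    linarith
  rcases eq_or_lt_of_le hn with h1 | h2
  · -- n = 1
    rw [← h1]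
    simp only [pow_one, Nat.cast_one]
    linarith
  · have hn2 : 2 ≤ n := h2
    have hn2R : (2:ℝ) ≤ n := by exact_mod_cast hn2
    -- binomial bound: choose n 2 * x^2 ≤ (1+x)^n
    have hch0 : (0:ℝ) < (n.choose 2 : ℝ) := by
      have : 0 < n.choose 2 := Nat.choose_pos hn2
      exact_mod_cast this
    have hbinom : (n.choose 2 : ℝ) * x ^ 2 ≤ (1 + x) ^ n := by
      have hx1 : (1 + x) ^ n = ∑ k ∈ Finset.range (n + 1), x ^ k * 1 ^ (n - k) * (n.choose k : ℝ) := by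
        rw [add_comm]; exact add_pow x 1 n
      rw [hx1]
      have hmem : 2 ∈ Finset.range (n + 1) := Finset.mem_range.mpr (by omega)
      have := Finset.single_le_sum (f := fun k => x ^ k * 1 ^ (n - k) * (n.choose k : ℝ))
        (fun k _ => by positivity) hmem
      simpa [mul_comm] using this
    have hbn : b ^ n ≤ ((n.choose 2 : ℝ) * x ^ 2)⁻¹ := by
      rw [hb, inv_pow]
      exact inv_anti₀ (by positivity) hbinom
    have hfinal : (n:ℝ) * (x ^ 2 * b ^ n) ≤ 4 / n := by
      have h1 : (n:ℝ) * (x ^ 2 * b ^ n) ≤ (n:ℝ) * (x ^ 2 * ((n.choose 2 : ℝ) * x ^ 2)⁻¹) := by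
        gcongr
      have h2 : (n:ℝ) * (x ^ 2 * ((n.choose 2 : ℝ) * x ^ 2)⁻¹) = n / (n.choose 2 : ℝ) := by
        field_simp
      have h3 : (n:ℝ) / (n.choose 2 : ℝ) ≤ 4 / n := by
        rw [div_le_div_iff₀ hch0 hn0, Nat.cast_choose_two]
        nlinarith
      linarith
    linarith


lemma memℓp_two_mul (g : lp (fun _ : ℕ => ℝ) 2) {μ : ℕ → ℝ} (hμ : ∀ k, |μ k| ≤ 1) :
    Memℓp (fun k => μ k * g k) 2 := by
  apply memℓp_gen
  have h2 : (0:ℝ) < (2:ℝ≥0∞).toReal := by norm_num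
  refine Summable.of_nonneg_of_le (fun k => Real.rpow_nonneg (norm_nonneg _) _)
    (fun k => ?_) ((lp.memℓp g).summable h2)
  refine Real.rpow_le_rpow (norm_nonneg _) ?_ h2.le
  rw [norm_mul]
  calc ‖μ k‖ * ‖g k‖ ≤ 1 * ‖g k‖ := by
        apply mul_le_mul_of_nonneg_right _ (norm_nonneg _)
        simpa [Real.norm_eq_abs] using hμ k
    _ = ‖g k‖ := one_mul _

/-- Nonsmooth-data Euler error estimate (4.6) in the diagonal setting: there is `C` such
that `‖E(nτ)v − R(τ)ⁿ v‖ ≤ C τ tₙ^{-1} ‖v‖ = (C/n) ‖v‖` for all `τ > 0`, `n ≥ 1`, `v ∈ H`. -/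
theorem euler_nonsmooth_error {H : Type*} [NormedAddCommGroup H] [InnerProductSpace ℝ H]
    [CompleteSpace H]
    (e : HilbertBasis ℕ ℝ H) (lam : ℕ → ℝ)
    (hpos : ∀ k, 0 < lam k) (hmono : Monotone lam)
    (htop : Filter.Tendsto lam Filter.atTop Filter.atTop)
    (E : ℝ → H → H) (R : ℝ → ℕ → H → H)
    (hE : ∀ t v, E t v = ∑' k, (Real.exp (-t * lam k) * ⟪e k, v⟫) • e k)
    (hR : ∀ τ n v, R τ n v = ∑' k, (((1 + τ * lam k) ^ n)⁻¹ * ⟪e k, v⟫) • e k) :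
    ∃ C : ℝ, 0 < C ∧ ∀ τ : ℝ, 0 < τ → ∀ n : ℕ, 1 ≤ n → ∀ v : H,
      ‖E (n * τ) v - R τ n v‖ ≤ (C / n) * ‖v‖ := by
  refine ⟨4, by norm_num, fun τ hτ n hn v => ?_⟩
  have hn0 : (0:ℝ) < n := by exact_mod_cast hn
  set g : lp (fun _ : ℕ => ℝ) 2 := e.repr v with hg
  have hgk : ∀ k, ⟪e k, v⟫ = g k := fun k => (e.repr_apply_apply v k).symm
  set μE : ℕ → ℝ := fun k => Real.exp (-(↑n * τ) * lam k) with hμEdef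
  set μR : ℕ → ℝ := fun k => ((1 + τ * lam k) ^ n)⁻¹ with hμRdef
  have hxk : ∀ k, 0 ≤ τ * lam k := fun k => (mul_pos hτ (hpos k)).le
  have hμE1 : ∀ k, |μE k| ≤ 1 := by
    intro k
    rw [hμEdef, abs_of_pos (Real.exp_pos _)]
    exact Real.exp_le_one_iff.mpr (by nlinarith [hxk k])
  have hμR1 : ∀ k, |μR k| ≤ 1 := by
    intro k
    have h1 : (0:ℝ) < 1 + τ * lam k := by nlinarith [hxk k]
    rw [hμRdef, abs_of_pos (by positivity)]
    exact inv_le_one_of_one_le₀ (one_le_pow₀ (by nlinarith [hxk k]))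
  have hdiff : ∀ k, |μE k - μR k| ≤ 4 / n := by
    intro k
    have := euler_scalar (hxk k) hn
    have heq : -(↑n * τ) * lam k = -(↑n * (τ * lam k)) := by ring
    simp only [hμEdef, hμRdef]
    rw [heq]
    exact this
  set fE : lp (fun _ : ℕ => ℝ) 2 := ⟨fun k => μE k * g k, memℓp_two_mul g hμE1⟩ with hfE
  set fR : lp (fun _ : ℕ => ℝ) 2 := ⟨fun k => μR k * g k, memℓp_two_mul g hμR1⟩ with hfR
  have hEeq : E (↑n * τ) v = e.repr.symm fE := by
    rw [hE]
    simp only [hgk]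
    exact (e.hasSum_repr_symm fE).tsum_eq.symm ▸ rfl
  have hReq : R τ n v = e.repr.symm fR := by
    rw [hR]
    simp only [hgk]
    exact (e.hasSum_repr_symm fR).tsum_eq.symm ▸ rfl
  rw [hEeq, hReq, ← LinearIsometryEquiv.map_sub, LinearIsometryEquiv.norm_map]
  have hvnorm : ‖g‖ = ‖v‖ := by rw [hg]; exact e.repr.norm_map v
  have h2 : (0:ℝ) < (2:ℝ≥0∞).toReal := by norm_num
  set t : ℝ := (2:ℝ≥0∞).toReal with ht
  refine lp.norm_le_of_tsum_le h2 (by positivity) ?_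
  have hcoe : ∀ k, ((fE - fR : lp (fun _ : ℕ => ℝ) 2) : ∀ _ : ℕ, ℝ) k = (μE k - μR k) * g k := by
    intro k
    simp only [lp.coeFn_sub, Pi.sub_apply, hfE, hfR]
    ring
  have hterm : ∀ k, ‖((fE - fR : lp (fun _ : ℕ => ℝ) 2) : ∀ _ : ℕ, ℝ) k‖ ^ t
      ≤ (4 / ↑n) ^ t * ‖g k‖ ^ t := by
    intro k
    rw [← Real.mul_rpow (by positivity) (norm_nonneg _)]
    refine Real.rpow_le_rpow (norm_nonneg _) ?_ h2.le
    rw [hcoe k, norm_mul]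
    apply mul_le_mul_of_nonneg_right _ (norm_nonneg _)
    simpa [Real.norm_eq_abs] using hdiff k
  calc ∑' k, ‖((fE - fR : lp (fun _ : ℕ => ℝ) 2) : ∀ _ : ℕ, ℝ) k‖ ^ t
      ≤ ∑' k, (4 / ↑n) ^ t * ‖g k‖ ^ t := by
        refine Summable.tsum_le_tsum hterm ((lp.memℓp (fE - fR)).summable h2) ?_
        exact ((lp.memℓp g).summable h2).mul_left _
    _ = (4 / ↑n) ^ t * ∑' k, ‖g k‖ ^ t := tsum_mul_left
    _ = (4 / ↑n) ^ t * ‖g‖ ^ t := by rw [← lp.norm_rpow_eq_tsum h2]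
    _ = (4 / ↑n * ‖v‖) ^ t := by
        rw [Real.mul_rpow (by positivity) (norm_nonneg _), hvnorm]
end

section
/- Let H, (e_k), (λ_k), E, R, ‖·‖_s be as in the context. For every β ∈ [0,2] there exists a constant C such that for all τ > 0, all integers n ≥ 1 and all v ∈ H with ‖v‖_{β−1} < ∞, ∑_{k=1}^n τ ‖R(τ)^k v − E(kτ) v‖² ≤ C τ^β ‖v‖²_{β−1}. -/
open scoped RealInnerProductSpace ENNReal
open Finset

lemma geom_range_le {q : ℝ} (h0 : 0 ≤ q) (h1 : q < 1) (n : ℕ) :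
    ∑ i ∈ range n, q ^ i ≤ 1 / (1 - q) := by
  have hq : 0 < 1 - q := by linarith
  rw [le_div_iff₀ hq]
  have := geom_sum_mul q n
  have hqn : 0 ≤ q ^ n := pow_nonneg h0 n
  nlinarith [this]

lemma k_mul_pow_le {q : ℝ} (h0 : 0 ≤ q) (h1 : q < 1) (k : ℕ) (hk : 1 ≤ k) :
    (k : ℝ) * q ^ (k - 1) ≤ 1 / (1 - q) := by
  have hq : 0 < 1 - q := by linarith
  rw [le_div_iff₀ hq]
  have key : (k : ℝ) * q ^ (k - 1) = ∑ _i ∈ range k, q ^ (k-1) := by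
    rw [Finset.sum_const, card_range, nsmul_eq_mul]
  rw [key]
  have h2 : ∑ _i ∈ range k, q ^ (k-1) ≤ ∑ i ∈ range k, q ^ i := by
    apply Finset.sum_le_sum
    intro i hi
    exact pow_le_pow_of_le_one h0 h1.le (by
      have := Finset.mem_range.mp hi; omega)
  have h3 : (∑ i ∈ range k, q ^ i) * (1 - q) ≤ 1 := by
    have := geom_sum_mul q k
    have hqn : 0 ≤ q ^ k := pow_nonneg h0 k
    nlinarith
  calc (∑ _i ∈ range k, q ^ (k-1)) * (1-q) ≤ (∑ i ∈ range k, q ^ i) * (1-q) := by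
        apply mul_le_mul_of_nonneg_right h2 hq.le
    _ ≤ 1 := h3

lemma sum_k_geom_identity {q : ℝ} (n : ℕ) :
    (1 - q) * ∑ i ∈ range n, ((i : ℝ) + 1) * q ^ i + (n : ℝ) * q ^ n
      = ∑ i ∈ range n, q ^ i := by
  induction n with
  | zero => simp
  | succ m ih =>
    rw [Finset.sum_range_succ, Finset.sum_range_succ]
    push_cast
    linear_combination ih

lemma sum_k_geom_le {q : ℝ} (h0 : 0 ≤ q) (h1 : q < 1) (n : ℕ) :
    ∑ i ∈ range n, ((i : ℝ) + 1) * q ^ i ≤ 1 / (1 - q) ^ 2 := by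
  have hq : 0 < 1 - q := by linarith
  have h := sum_k_geom_identity (q := q) n
  have h2 : (1 - q) * ∑ i ∈ range n, ((i : ℝ) + 1) * q ^ i ≤ 1 / (1-q) := by
    have hnq : 0 ≤ (n : ℝ) * q ^ n := by positivity
    linarith [geom_range_le h0 h1 n]
  have h3 := mul_le_mul_of_nonneg_right h2 hq.le
  rw [div_mul_cancel₀ 1 hq.ne'] at h3
  rw [le_div_iff₀ (pow_pos hq 2)]
  nlinarith [h3]

lemma sum_k_geom_le' {q : ℝ} (h0 : 0 ≤ q) (h1 : q < 1) (n : ℕ) :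
    ∑ k ∈ Finset.Icc 1 n, (k : ℝ) * q ^ (k - 1) ≤ 1 / (1 - q) ^ 2 := by
  have : ∑ k ∈ Finset.Icc 1 n, (k : ℝ) * q ^ (k - 1)
      = ∑ i ∈ range n, ((i : ℝ) + 1) * q ^ i := by
    rw [← Finset.Ico_add_one_right_eq_Icc, Finset.sum_Ico_eq_sum_range]
    simp [add_comm 1, Nat.add_sub_cancel]
  rw [this]; exact sum_k_geom_le h0 h1 n

lemma euler_scalar_bound {x : ℝ} (hx : 0 < x) {β : ℝ} (hβ0 : 0 ≤ β) (hβ2 : β ≤ 2) (n : ℕ) :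
    ∑ k ∈ Finset.Icc 1 n, (((1+x)^k)⁻¹ - Real.exp (-((k:ℝ)*x)))^2 ≤ 8 * x ^ (β-1) := by
  have h1x : (0:ℝ) < 1 + x := by linarith
  set a : ℝ := (1+x)⁻¹ with ha_def
  set b : ℝ := Real.exp (-x) with hb_def
  have ha0 : 0 < a := by positivity
  have ha1 : a < 1 := by
    rw [ha_def, inv_lt_one_iff₀]; right; linarith
  have hb0 : 0 < b := Real.exp_pos _
  have hba : b ≤ a := by
    rw [hb_def, ha_def, Real.exp_neg]
    exact inv_anti₀ h1x (by linarith [Real.add_one_le_exp x])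
  have haeq : a * (1+x) = 1 := inv_mul_cancel₀ h1x.ne'
  have hb_ge : 1 - x ≤ b := by
    have := Real.add_one_le_exp (-x); linarith
  have hab2 : a - b ≤ x^2 := by nlinarith
  have hterm : ∀ k : ℕ, (((1+x)^k)⁻¹ - Real.exp (-((k:ℝ)*x)))^2 = (a^k - b^k)^2 := by
    intro k
    rw [ha_def, hb_def, inv_pow, ← Real.exp_nat_mul]
    ring_nf
  simp only [hterm]
  have hd0 : ∀ k : ℕ, 0 ≤ a^k - b^k := fun k => by
    have := pow_le_pow_left₀ hb0.le hba k; linarith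
  rcases le_or_gt 1 x with hx1 | hx1
  · set q : ℝ := a^2 with hq_def
    have hq0 : 0 < q := by positivity
    have hq1 : q < 1 := by nlinarith
    have hstep : ∀ k ∈ Finset.Icc 1 n, (a^k - b^k)^2 ≤ q^k := by
      intro k _
      have h1 : a^k - b^k ≤ a^k := sub_le_self _ (pow_nonneg hb0.le k)
      have h2 : (a^k - b^k)^2 ≤ (a^k)^2 :=
        pow_le_pow_left₀ (hd0 k) h1 2
      calc (a^k - b^k)^2 ≤ (a^k)^2 := h2
        _ = q^k := by rw [hq_def, ← pow_mul, ← pow_mul, Nat.mul_comm]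
    have hsum : ∑ k ∈ Finset.Icc 1 n, (a^k - b^k)^2 ≤ ∑ k ∈ Finset.Icc 1 n, q^k :=
      Finset.sum_le_sum hstep
    have hgeo : ∑ k ∈ Finset.Icc 1 n, q^k = q * ∑ i ∈ range n, q^i := by
      rw [← Finset.Ico_add_one_right_eq_Icc, Finset.sum_Ico_eq_sum_range]
      simp [pow_add, pow_succ, Finset.mul_sum, mul_comm]
    have hgeo2 : q * ∑ i ∈ range n, q^i ≤ q * (1/(1-q)) := by
      apply mul_le_mul_of_nonneg_left (geom_range_le hq0.le hq1 n) hq0.le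
    have hqx : q * (1/(1-q)) ≤ x⁻¹ := by
      rw [mul_one_div, div_le_iff₀ (by linarith)]
      have hqa : q * (1+x)^2 = 1 := by
        rw [hq_def]; linear_combination (a*(1+x)+1) * haeq
      rw [inv_mul_eq_div, le_div_iff₀ hx]
      nlinarith
    have hrx : x⁻¹ ≤ x ^ (β - 1) := by
      rw [← Real.rpow_neg_one x]
      exact Real.rpow_le_rpow_of_exponent_le hx1 (by linarith)
    have h8 : x ^ (β-1) ≤ 8 * x ^ (β-1) := by
      have : (0:ℝ) ≤ x ^ (β-1) := Real.rpow_nonneg hx.le _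
      linarith
    linarith [hsum, hgeo2, hqx, hrx, h8, hgeo.le, hgeo.ge]
  · have hstep : ∀ k ∈ Finset.Icc 1 n,
        (a^k - b^k)^2 ≤ (x^4 * (1/(1-a))) * ((k:ℝ) * a^(k-1)) := by
      intro k hk
      have hk1 : 1 ≤ k := (Finset.mem_Icc.mp hk).1
      have hgs : a^k - b^k = (∑ i ∈ range k, a^i * b^(k-1-i)) * (a - b) :=
        (geom_sum₂_mul a b k).symm
      have hsb : ∑ i ∈ range k, a^i * b^(k-1-i) ≤ (k:ℝ) * a^(k-1) := by
        have : ∀ i ∈ range k, a^i * b^(k-1-i) ≤ a^(k-1) := by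
          intro i hi
          have hik : i < k := Finset.mem_range.mp hi
          calc a^i * b^(k-1-i) ≤ a^i * a^(k-1-i) := by
                apply mul_le_mul_of_nonneg_left (pow_le_pow_left₀ hb0.le hba _) (by positivity)
            _ = a^(k-1) := by rw [← pow_add]; congr 1; omega
        calc ∑ i ∈ range k, a^i * b^(k-1-i) ≤ ∑ _i ∈ range k, a^(k-1) :=
              Finset.sum_le_sum this
          _ = (k:ℝ) * a^(k-1) := by rw [Finset.sum_const, card_range, nsmul_eq_mul]
      have hd_le : a^k - b^k ≤ (k:ℝ) * a^(k-1) * x^2 := by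
        rw [hgs]
        have hab0 : 0 ≤ a - b := by linarith
        calc (∑ i ∈ range k, a^i * b^(k-1-i)) * (a - b)
            ≤ ((k:ℝ) * a^(k-1)) * (a-b) := by
              apply mul_le_mul_of_nonneg_right hsb hab0
          _ ≤ (k:ℝ) * a^(k-1) * x^2 := by
              apply mul_le_mul_of_nonneg_left hab2 (by positivity)
      have hsq : (a^k - b^k)^2 ≤ ((k:ℝ) * a^(k-1) * x^2)^2 :=
        pow_le_pow_left₀ (hd0 k) hd_le 2
      have hkk : ((k:ℝ) * a^(k-1)) * ((k:ℝ) * a^(k-1)) ≤ (1/(1-a)) * ((k:ℝ) * a^(k-1)) := by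
        apply mul_le_mul_of_nonneg_right (k_mul_pow_le ha0.le ha1 k hk1) (by positivity)
      calc (a^k - b^k)^2 ≤ ((k:ℝ) * a^(k-1) * x^2)^2 := hsq
        _ = x^4 * (((k:ℝ) * a^(k-1)) * ((k:ℝ) * a^(k-1))) := by ring
        _ ≤ x^4 * ((1/(1-a)) * ((k:ℝ) * a^(k-1))) := by
            apply mul_le_mul_of_nonneg_left hkk (by positivity)
        _ = (x^4 * (1/(1-a))) * ((k:ℝ) * a^(k-1)) := by ring
    have hsum : ∑ k ∈ Finset.Icc 1 n, (a^k - b^k)^2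
        ≤ (x^4 * (1/(1-a))) * ∑ k ∈ Finset.Icc 1 n, ((k:ℝ) * a^(k-1)) := by
      rw [Finset.mul_sum]
      exact Finset.sum_le_sum hstep
    have hA : 0 < 1 - a := by linarith
    have key : (1 - a) * (1+x) = x := by
      have : a * (1+x) = 1 := haeq
      nlinarith [this]
    have h1a' : x/2 ≤ 1 - a := by nlinarith [key]
    have h1a : 1/(1-a) ≤ 2/x := by
      rw [div_le_div_iff₀ hA hx]
      nlinarith
    have hsum2 : ∑ k ∈ Finset.Icc 1 n, ((k:ℝ) * a^(k-1)) ≤ (2/x)^2 := by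
      calc ∑ k ∈ Finset.Icc 1 n, ((k:ℝ) * a^(k-1)) ≤ 1/(1-a)^2 :=
            sum_k_geom_le' ha0.le ha1 n
        _ = (1/(1-a))^2 := by rw [div_pow, one_pow]
        _ ≤ (2/x)^2 := by
            apply pow_le_pow_left₀ (by positivity) h1a
    have hfin : (x^4 * (1/(1-a))) * ∑ k ∈ Finset.Icc 1 n, ((k:ℝ) * a^(k-1)) ≤ 8 * x := by
      have hx40 : (0:ℝ) ≤ x^4 := by positivity
      calc (x^4 * (1/(1-a))) * ∑ k ∈ Finset.Icc 1 n, ((k:ℝ) * a^(k-1))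
          ≤ (x^4 * (2/x)) * (2/x)^2 := by
            apply mul_le_mul
            · exact mul_le_mul_of_nonneg_left h1a hx40
            · exact hsum2
            · apply Finset.sum_nonneg; intro k _; positivity
            · positivity
        _ = 8 * x := by field_simp; ring
    have hfin2 : 8 * x ≤ 8 * x ^ (β - 1) := by
      have : x ≤ x ^ (β-1) := by
        calc x = x ^ (1:ℝ) := (Real.rpow_one x).symm
          _ ≤ x ^ (β-1) := Real.rpow_le_rpow_of_exponent_ge hx hx1.le (by linarith)
      linarith
    linarith

lemma coeff_rep {H : Type*} [NormedAddCommGroup H] [InnerProductSpace ℝ H] [CompleteSpace H]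
    (e : HilbertBasis ℕ ℝ H) (f : ℕ → ℝ) (hf : Summable fun j => f j ^ 2) :
    ∃ w : H, HasSum (fun j => f j • e j) w ∧ ‖w‖^2 = ∑' j, f j ^ 2 := by
  have h2 : ((2:ℝ≥0∞)).toReal = 2 := by simp
  have hf2 : Memℓp f 2 := by
    apply memℓp_gen
    refine hf.congr fun j => ?_
    rw [h2, show ((2:ℝ):ℝ) = ((2:ℕ):ℝ) by norm_num, Real.rpow_natCast,
      Real.norm_eq_abs, sq_abs]
  set F : lp (fun _ : ℕ => ℝ) 2 := ⟨f, hf2⟩ with hF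
  have hFcoe : ∀ j, F j = f j := fun j => rfl
  refine ⟨e.repr.symm F, ?_, ?_⟩
  · exact e.hasSum_repr_symm F
  · rw [LinearIsometryEquiv.norm_map]
    have hnorm := lp.norm_rpow_eq_tsum (p := 2) (by norm_num) F
    rw [h2] at hnorm
    have hl : ‖F‖ ^ (2:ℝ) = ‖F‖ ^ (2:ℕ) := by
      rw [show ((2:ℝ):ℝ) = ((2:ℕ):ℝ) by norm_num, Real.rpow_natCast]
    rw [hl] at hnorm
    rw [hnorm]
    congr 1
    ext j
    rw [hFcoe, show ((2:ℝ):ℝ) = ((2:ℕ):ℝ) by norm_num, Real.rpow_natCast,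
      Real.norm_eq_abs, sq_abs]

lemma parseval_sq {H : Type*} [NormedAddCommGroup H] [InnerProductSpace ℝ H] [CompleteSpace H]
    (e : HilbertBasis ℕ ℝ H) (v : H) : Summable fun j => ⟪e j, v⟫ ^ 2 := by
  have := (e.hasSum_inner_mul_inner v v).summable
  refine this.congr fun j => ?_
  rw [real_inner_comm v (e j), sq]

lemma mul_sq_le {r c : ℝ} (h1 : 0 ≤ r) (h2 : r ≤ 1) : (r * c)^2 ≤ c^2 := by
  have h3 : r^2 ≤ 1 := by nlinarith
  calc (r*c)^2 = r^2 * c^2 := by ring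
    _ ≤ 1 * c^2 := mul_le_mul_of_nonneg_right h3 (sq_nonneg c)
    _ = c^2 := one_mul _

lemma sq_sub_le_one {r s : ℝ} (hr0 : 0 ≤ r) (hr1 : r ≤ 1) (hs0 : 0 ≤ s) (hs1 : s ≤ 1) :
    (r - s)^2 ≤ 1 := by
  nlinarith [mul_nonneg hr0 (sub_nonneg.2 hr1), mul_nonneg hs0 (sub_nonneg.2 hs1),
    mul_nonneg hr0 hs0, mul_nonneg (sub_nonneg.2 hr1) (sub_nonneg.2 hs1)]

lemma mode_bound {τ lamj cj β : ℝ} (hτ : 0 < τ) (hl : 0 < lamj)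
    (hβ0 : 0 ≤ β) (hβ2 : β ≤ 2) (n : ℕ) :
    ∑ k ∈ Finset.Icc 1 n,
        τ * ((((1 + τ * lamj) ^ k)⁻¹ - Real.exp (-((k : ℝ) * τ) * lamj)) * cj) ^ 2
      ≤ 8 * τ ^ β * (lamj ^ (β - 1) * cj ^ 2) := by
  have hx : 0 < τ * lamj := mul_pos hτ hl
  have hsc := euler_scalar_bound hx hβ0 hβ2 n
  have hrw : ∑ k ∈ Finset.Icc 1 n,
      τ * ((((1 + τ * lamj) ^ k)⁻¹ - Real.exp (-((k : ℝ) * τ) * lamj)) * cj) ^ 2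
      = (τ * cj ^ 2) *
        ∑ k ∈ Finset.Icc 1 n, (((1 + τ * lamj) ^ k)⁻¹ - Real.exp (-((k:ℝ) * (τ * lamj)))) ^ 2 := by
    rw [Finset.mul_sum]
    apply Finset.sum_congr rfl
    intro k _
    have harg : -((k:ℝ) * τ) * lamj = -((k:ℝ) * (τ * lamj)) := by ring
    rw [harg]
    ring
  rw [hrw]
  have h1 : (τ * cj ^ 2) *
      (∑ k ∈ Finset.Icc 1 n, (((1 + τ * lamj) ^ k)⁻¹ - Real.exp (-((k:ℝ) * (τ * lamj)))) ^ 2)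
      ≤ (τ * cj ^ 2) * (8 * (τ * lamj) ^ (β - 1)) := by
    apply mul_le_mul_of_nonneg_left hsc (by positivity)
  refine h1.trans_eq ?_
  rw [Real.mul_rpow hτ.le hl.le]
  have hτβ : τ ^ β = τ ^ (β - 1) * τ := by
    rw [show β = (β - 1) + 1 by ring, Real.rpow_add hτ, Real.rpow_one]
    ring_nf
  rw [hτβ]
  ring

/-- Summed (ℓ²-in-time) Euler error estimate (4.7) in the diagonal setting: for `β ∈ [0,2]`
there is `C` such that `∑_{k=1}^n τ ‖R(τ)^k v − E(kτ) v‖² ≤ C τ^β ‖v‖²_{β−1}` for `τ > 0`,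
`n ≥ 1`, where `‖v‖²_{β−1} = ∑_k λ_k^{β−1} ⟨v,e_k⟩²`. -/
theorem euler_summed_error {H : Type*} [NormedAddCommGroup H] [InnerProductSpace ℝ H]
    [CompleteSpace H]
    (e : HilbertBasis ℕ ℝ H) (lam : ℕ → ℝ)
    (hpos : ∀ k, 0 < lam k) (hmono : Monotone lam)
    (htop : Filter.Tendsto lam Filter.atTop Filter.atTop)
    (E : ℝ → H → H) (R : ℝ → ℕ → H → H)
    (hE : ∀ t v, E t v = ∑' k, (Real.exp (-t * lam k) * ⟪e k, v⟫) • e k)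
    (hR : ∀ τ n v, R τ n v = ∑' k, (((1 + τ * lam k) ^ n)⁻¹ * ⟪e k, v⟫) • e k)
    (β : ℝ) (hβ0 : 0 ≤ β) (hβ2 : β ≤ 2) :
    ∃ C : ℝ, 0 < C ∧ ∀ τ : ℝ, 0 < τ → ∀ n : ℕ, 1 ≤ n → ∀ v : H,
      Summable (fun k => lam k ^ (β - 1) * ⟪e k, v⟫ ^ 2) →
      ∑ k ∈ Finset.Icc 1 n, τ * ‖R τ k v - E (k * τ) v‖ ^ 2
        ≤ C * τ ^ β * ∑' k, lam k ^ (β - 1) * ⟪e k, v⟫ ^ 2 := by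
  refine ⟨8, by norm_num, ?_⟩
  intro τ hτ n hn v hsum
  have hcsq : Summable fun j => ⟪e j, v⟫ ^ 2 := parseval_sq e v
  have hRbd : ∀ (k j : ℕ), 0 < ((1 + τ * lam j) ^ k)⁻¹ ∧ ((1 + τ * lam j) ^ k)⁻¹ ≤ 1 := by
    intro k j
    have h1 : (1:ℝ) ≤ (1 + τ * lam j) ^ k :=
      one_le_pow₀ (by nlinarith [hpos j])
    exact ⟨by positivity, inv_le_one_of_one_le₀ h1⟩
  have hEbd : ∀ (k j : ℕ), 0 < Real.exp (-((k : ℝ) * τ) * lam j) ∧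
      Real.exp (-((k : ℝ) * τ) * lam j) ≤ 1 := by
    intro k j
    refine ⟨Real.exp_pos _, ?_⟩
    rw [Real.exp_le_one_iff]
    have h0 : (0:ℝ) ≤ (k : ℝ) * τ := by positivity
    have := mul_nonneg h0 (hpos j).le
    linarith
  have hsymb : ∀ (k j : ℕ),
      (((1 + τ * lam j) ^ k)⁻¹ - Real.exp (-((k : ℝ) * τ) * lam j)) ^ 2 ≤ 1 := by
    intro k j
    exact sq_sub_le_one (hRbd k j).1.le (hRbd k j).2 (hEbd k j).1.le (hEbd k j).2
  have hdsq : ∀ k : ℕ, Summable fun j =>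
      ((((1 + τ * lam j) ^ k)⁻¹ - Real.exp (-((k : ℝ) * τ) * lam j)) * ⟪e j, v⟫) ^ 2 := by
    intro k
    refine Summable.of_nonneg_of_le (fun j => sq_nonneg _) (fun j => ?_) hcsq
    have h := hsymb k j
    have hc := sq_nonneg (⟪e j, v⟫)
    calc ((((1 + τ * lam j) ^ k)⁻¹ - Real.exp (-((k : ℝ) * τ) * lam j)) * ⟪e j, v⟫) ^ 2
        = (((1 + τ * lam j) ^ k)⁻¹ - Real.exp (-((k : ℝ) * τ) * lam j)) ^ 2 * ⟪e j, v⟫ ^ 2 := by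
          ring
      _ ≤ 1 * ⟪e j, v⟫ ^ 2 := mul_le_mul_of_nonneg_right h hc
      _ = ⟪e j, v⟫ ^ 2 := one_mul _
  have hnorm : ∀ k : ℕ, ‖R τ k v - E ((k : ℝ) * τ) v‖ ^ 2
      = ∑' j, ((((1 + τ * lam j) ^ k)⁻¹ - Real.exp (-((k : ℝ) * τ) * lam j)) * ⟪e j, v⟫) ^ 2 := by
    intro k
    have hfRsq : Summable fun j => (((1 + τ * lam j) ^ k)⁻¹ * ⟪e j, v⟫) ^ 2 := by
      refine Summable.of_nonneg_of_le (fun j => sq_nonneg _) (fun j => ?_) hcsq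
      exact mul_sq_le (hRbd k j).1.le (hRbd k j).2
    have hfEsq : Summable fun j => (Real.exp (-((k : ℝ) * τ) * lam j) * ⟪e j, v⟫) ^ 2 := by
      refine Summable.of_nonneg_of_le (fun j => sq_nonneg _) (fun j => ?_) hcsq
      exact mul_sq_le (hEbd k j).1.le (hEbd k j).2
    obtain ⟨wR, hwR, _⟩ := coeff_rep e (fun j => ((1 + τ * lam j) ^ k)⁻¹ * ⟪e j, v⟫) hfRsq
    obtain ⟨wE, hwE, _⟩ :=
      coeff_rep e (fun j => Real.exp (-((k : ℝ) * τ) * lam j) * ⟪e j, v⟫) hfEsq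
    obtain ⟨wD, hwD, hwDn⟩ := coeff_rep e
      (fun j => (((1 + τ * lam j) ^ k)⁻¹ - Real.exp (-((k : ℝ) * τ) * lam j)) * ⟪e j, v⟫)
      (hdsq k)
    have hWsub : HasSum (fun j =>
        ((((1 + τ * lam j) ^ k)⁻¹ - Real.exp (-((k : ℝ) * τ) * lam j)) * ⟪e j, v⟫) • e j)
        (wR - wE) := by
      have heq : (fun j =>
          ((((1 + τ * lam j) ^ k)⁻¹ - Real.exp (-((k : ℝ) * τ) * lam j)) * ⟪e j, v⟫) • e j)
          = fun j => ((((1 + τ * lam j) ^ k)⁻¹ * ⟪e j, v⟫) • e j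
              - (Real.exp (-((k : ℝ) * τ) * lam j) * ⟪e j, v⟫) • e j) := by
        funext j
        rw [sub_mul, sub_smul]
      rw [heq]
      exact hwR.sub hwE
    have hwd : wD = wR - wE := hwD.unique hWsub
    have hRv : R τ k v = wR := by rw [hR]; exact hwR.tsum_eq
    have hEv : E ((k : ℝ) * τ) v = wE := by rw [hE]; exact hwE.tsum_eq
    rw [hRv, hEv, ← hwd]
    exact hwDn
  calc ∑ k ∈ Finset.Icc 1 n, τ * ‖R τ k v - E (k * τ) v‖ ^ 2
      = ∑ k ∈ Finset.Icc 1 n, ∑' j,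
          τ * ((((1 + τ * lam j) ^ k)⁻¹ - Real.exp (-((k : ℝ) * τ) * lam j)) * ⟪e j, v⟫) ^ 2 := by
        apply Finset.sum_congr rfl
        intro k _
        rw [hnorm k, tsum_mul_left]
    _ = ∑' j, ∑ k ∈ Finset.Icc 1 n,
          τ * ((((1 + τ * lam j) ^ k)⁻¹ - Real.exp (-((k : ℝ) * τ) * lam j)) * ⟪e j, v⟫) ^ 2 :=
        (Summable.tsum_finsetSum (fun k _ => (hdsq k).mul_left τ)).symm
    _ ≤ ∑' j, 8 * τ ^ β * (lam j ^ (β - 1) * ⟪e j, v⟫ ^ 2) := by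
        apply Summable.tsum_le_tsum
        · intro j
          exact mode_bound hτ (hpos j) hβ0 hβ2 n
        · exact summable_sum (fun k _ => (hdsq k).mul_left τ)
        · exact hsum.mul_left _
    _ = 8 * τ ^ β * ∑' j, lam j ^ (β - 1) * ⟪e j, v⟫ ^ 2 := tsum_mul_left
end

section
/- Let H, (e_k), (λ_k), E, ‖·‖_s be as in the context. For every η ∈ [0, 1/2] there exists a constant C = C(η) such that for all 0 ≤ s ≤ t and all v ∈ H with ‖v‖_{−2η} < ∞ (i.e. ‖A^{-η}v‖ < ∞), ∫₀^s ‖(E(t−σ) − E(s−σ)) v‖² dσ ≤ C (t−s)^{1−2η} ‖A^{-η} v‖². -/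
/-!
In the eigenbasis the integrand is `∑ₖ (e^{-(t-σ)λₖ} - e^{-(s-σ)λₖ})² ⟨v, eₖ⟩²`. Each mode factors
as `(1 - e^{-(t-s)λₖ})² e^{-2(s-σ)λₖ}`, so its integral over `[0, s]` is at most
`(1 - e^{-(t-s)λₖ})² / (2λₖ)`; since `(1 - e^{-x})² ≤ min(1, x²) ≤ x^{1-2η}`, this is at most
`(t-s)^{1-2η} λₖ^{-2η} / 2`. Summing over the modes gives the estimate with `C = 1/2`.
-/

open MeasureTheory
open scoped RealInnerProductSpace

namespace HilbertBasis

variable {ι H : Type*} [NormedAddCommGroup H] [InnerProductSpace ℝ H]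
  (e : HilbertBasis ι ℝ H) {a b : ι → ℝ}

lemma memℓp_two_of_summable_sq (ha : Summable fun i => a i ^ 2) : Memℓp a 2 :=
  (memℓp_gen_iff (by norm_num)).2 (by simpa using ha)

lemma hasSum_smul_of_summable_sq (ha : Summable fun i => a i ^ 2) :
    HasSum (fun i => a i • e i) (e.repr.symm ⟨a, memℓp_two_of_summable_sq ha⟩) :=
  e.hasSum_repr_symm _

lemma norm_tsum_smul_sq (ha : Summable fun i => a i ^ 2) :
    ‖∑' i, a i • e i‖ ^ 2 = ∑' i, a i ^ 2 := by
  rw [(e.hasSum_smul_of_summable_sq ha).tsum_eq, LinearIsometryEquiv.norm_map,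
    ← real_inner_self_eq_norm_sq, lp.inner_eq_tsum]
  simp [sq]

lemma norm_tsum_smul_sub_tsum_smul_sq (ha : Summable fun i => a i ^ 2)
    (hb : Summable fun i => b i ^ 2) :
    ‖∑' i, a i • e i - ∑' i, b i • e i‖ ^ 2 = ∑' i, (a i - b i) ^ 2 := by
  have hab : Summable fun i => (a i - b i) ^ 2 :=
    ((ha.add hb).mul_left 2).of_nonneg_of_le (fun i => sq_nonneg _)
      (fun i => by nlinarith [sq_nonneg (a i + b i)])
  rw [← (e.hasSum_smul_of_summable_sq ha).summable.tsum_sub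
    (e.hasSum_smul_of_summable_sq hb).summable, ← e.norm_tsum_smul_sq hab]
  simp_rw [sub_smul]

end HilbertBasis

lemma integral_tsum_le_tsum_of_nonneg {ι α : Type*} [Countable ι] [MeasurableSpace α]
    {μ : Measure α} {F : ι → α → ℝ} {B : ι → ℝ} (hF : ∀ i, Integrable (F i) μ)
    (hF0 : ∀ i, 0 ≤ F i) (hFB : ∀ i, ∫ x, F i x ∂μ ≤ B i) (hB : Summable B) :
    ∫ x, ∑' i, F i x ∂μ ≤ ∑' i, B i := by
  have hnorm : ∀ i, ∫ x, ‖F i x‖ ∂μ = ∫ x, F i x ∂μ := fun i =>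
    integral_congr_ae (Filter.Eventually.of_forall fun x => Real.norm_of_nonneg (hF0 i x))
  have hsum : Summable fun i => ∫ x, F i x ∂μ :=
    hB.of_nonneg_of_le (fun i => integral_nonneg (hF0 i)) hFB
  rw [← integral_tsum_of_summable_integral_norm hF (by simpa only [hnorm] using hsum)]
  exact hsum.tsum_le_tsum hFB hB

lemma integral_exp_neg_mul_sub_le {c : ℝ} (hc : 0 < c) (s : ℝ) :
    ∫ σ in (0 : ℝ)..s, Real.exp (-c * (s - σ)) ≤ 1 / c := by
  have hderiv : ∀ σ ∈ Set.uIcc 0 s,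
      HasDerivAt (fun σ => Real.exp (-c * (s - σ)) / c) (Real.exp (-c * (s - σ))) σ := by
    intro σ _
    exact ((((hasDerivAt_id σ).const_sub s).const_mul (-c)).exp.div_const c).congr_deriv
      (by field_simp; rfl)
  rw [intervalIntegral.integral_eq_sub_of_hasDerivAt hderiv
    ((by fun_prop : Continuous _).intervalIntegrable _ _)]
  simp only [sub_self, mul_zero, Real.exp_zero]
  have hboundary : 0 < Real.exp (-c * (s - 0)) / c := by positivity
  linarith

lemma one_sub_exp_neg_sq_le_rpow {x α : ℝ} (hx : 0 ≤ x) (hα0 : 0 ≤ α) (hα2 : α ≤ 2) :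
    (1 - Real.exp (-x)) ^ 2 ≤ x ^ α := by
  have hlow : 0 ≤ 1 - Real.exp (-x) := by
    linarith [Real.exp_le_one_iff.2 (neg_nonpos.2 hx)]
  have hup : 1 - Real.exp (-x) ≤ x := by linarith [Real.add_one_le_exp (-x)]
  rcases hx.eq_or_lt with rfl | hx
  · simpa using Real.rpow_nonneg le_rfl α
  rcases le_or_gt x 1 with hx1 | hx1
  · calc (1 - Real.exp (-x)) ^ 2 ≤ x ^ (2 : ℝ) := by
          rw [Real.rpow_two]; exact pow_le_pow_left₀ hlow hup 2
      _ ≤ x ^ α := Real.rpow_le_rpow_of_exponent_ge hx hx1 hα2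
  · calc (1 - Real.exp (-x)) ^ 2 ≤ 1 := by
          nlinarith [Real.exp_pos (-x)]
      _ ≤ x ^ α := Real.one_le_rpow hx1.le hα0

lemma integral_exp_sub_exp_sq_le {L s t α : ℝ} (hL : 0 < L) (hs : 0 ≤ s) (hst : s ≤ t) (hα0 : 0 ≤ α)
    (hα2 : α ≤ 2) :
    ∫ σ in (0 : ℝ)..s, (Real.exp (-(t - σ) * L) - Real.exp (-(s - σ) * L)) ^ 2
      ≤ (t - s) ^ α * L ^ (α - 1) / 2 := by
  have hfactor : ∀ σ, (Real.exp (-(t - σ) * L) - Real.exp (-(s - σ) * L)) ^ 2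
      = (1 - Real.exp (-((t - s) * L))) ^ 2 * Real.exp (-(2 * L) * (s - σ)) := by
    intro σ
    rw [show -(t - σ) * L = -((t - s) * L) + -(s - σ) * L by ring,
      show -(2 * L) * (s - σ) = -(s - σ) * L + -(s - σ) * L by ring, Real.exp_add, Real.exp_add]
    ring
  simp_rw [hfactor]
  rw [intervalIntegral.integral_const_mul]
  have hpow : ((t - s) * L) ^ α = (t - s) ^ α * L ^ α := Real.mul_rpow (by linarith) hL.le
  calc (1 - Real.exp (-((t - s) * L))) ^ 2 * ∫ σ in (0 : ℝ)..s, Real.exp (-(2 * L) * (s - σ))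
      ≤ ((t - s) * L) ^ α * (1 / (2 * L)) := by
        refine mul_le_mul ?_ (integral_exp_neg_mul_sub_le (by positivity) s) ?_ ?_
        · exact one_sub_exp_neg_sq_le_rpow (mul_nonneg (by linarith) hL.le) hα0 hα2
        · exact intervalIntegral.integral_nonneg hs fun σ _ => (Real.exp_pos _).le
        · exact Real.rpow_nonneg (by positivity) α
    _ = (t - s) ^ α * L ^ (α - 1) / 2 := by
        rw [hpow, Real.rpow_sub_one hL.ne']
        field_simp

theorem stochastic_convolution_I2_general {H : Type*} [NormedAddCommGroup H] [InnerProductSpace ℝ H]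
    [CompleteSpace H]
    (e : HilbertBasis ℕ ℝ H) (lam : ℕ → ℝ)
    (hpos : ∀ k, 0 < lam k)
    (E : ℝ → H → H)
    (hE : ∀ t v, E t v = ∑' k, (Real.exp (-t * lam k) * ⟪e k, v⟫) • e k)
    (η : ℝ) (hη0 : 0 ≤ η) (hη : η ≤ 1 / 2) :
    ∃ C : ℝ, 0 < C ∧ ∀ s t : ℝ, 0 ≤ s → s ≤ t → ∀ v : H,
      Summable (fun k => lam k ^ (-(2 * η)) * ⟪e k, v⟫ ^ 2) →
      ∫ σ in (0 : ℝ)..s, ‖E (t - σ) v - E (s - σ) v‖ ^ 2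
        ≤ C * (t - s) ^ (1 - 2 * η) * ∑' k, lam k ^ (-(2 * η)) * ⟪e k, v⟫ ^ 2 := by
  refine ⟨1 / 2, one_half_pos, fun s t hs hst v hv => ?_⟩
  have hcoeff : Summable fun k => ⟪e k, v⟫ ^ 2 :=
    (e.summable_inner_mul_inner v v).congr fun k => by rw [real_inner_comm, sq]
  have hdamped : ∀ u, 0 ≤ u → Summable fun k => (Real.exp (-u * lam k) * ⟪e k, v⟫) ^ 2 := by
    intro u hu
    refine hcoeff.of_nonneg_of_le (fun k => sq_nonneg _) fun k => ?_
    have hexp : Real.exp (-u * lam k) ≤ 1 :=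
      Real.exp_le_one_iff.2 (by nlinarith [hpos k])
    rw [mul_pow]
    exact mul_le_of_le_one_left (sq_nonneg _) (pow_le_one₀ (Real.exp_pos _).le hexp)
  have hpointwise : Set.EqOn (fun σ => ‖E (t - σ) v - E (s - σ) v‖ ^ 2)
      (fun σ => ∑' k, (Real.exp (-(t - σ) * lam k) - Real.exp (-(s - σ) * lam k)) ^ 2
        * ⟪e k, v⟫ ^ 2) (Set.uIcc 0 s) := by
    intro σ hσ
    rw [Set.uIcc_of_le hs] at hσ
    simp only [hE]
    rw [e.norm_tsum_smul_sub_tsum_smul_sq (hdamped _ (by linarith [hσ.2]))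
      (hdamped _ (by linarith [hσ.2]))]
    simp_rw [← sub_mul, mul_pow]
  rw [intervalIntegral.integral_congr hpointwise, intervalIntegral.integral_of_le hs,
    ← tsum_mul_left]
  refine integral_tsum_le_tsum_of_nonneg (fun k => (by fun_prop : Continuous _).integrableOn_Ioc)
    (fun k σ => by positivity) (fun k => ?_) (hv.mul_left _)
  rw [integral_mul_const, ← intervalIntegral.integral_of_le hs]
  calc _ ≤ (t - s) ^ (1 - 2 * η) * lam k ^ (1 - 2 * η - 1) / 2 * ⟪e k, v⟫ ^ 2 :=
        mul_le_mul_of_nonneg_right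
          (integral_exp_sub_exp_sq_le (hpos k) hs hst (by linarith) (by linarith)) (sq_nonneg _)
    _ = _ := by rw [show 1 - 2 * η - 1 = -(2 * η) by ring]; ring

/-- The estimate of the term `I₂` in the proof of Theorem 5, in the diagonal setting: for
`η ∈ [0,1/2]` there is `C = C(η)` such that for `0 ≤ s ≤ t` and `v` with `‖A^{-η}v‖ < ∞`,
`∫₀^s ‖(E(t−σ) − E(s−σ)) v‖² dσ ≤ C (t−s)^{1−2η} ‖A^{-η} v‖²`, where
`‖A^{-η}v‖² = ∑_k λ_k^{-2η} ⟨v,e_k⟩²`. -/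
theorem stochastic_convolution_I2 {H : Type*} [NormedAddCommGroup H] [InnerProductSpace ℝ H]
    [CompleteSpace H]
    (e : HilbertBasis ℕ ℝ H) (lam : ℕ → ℝ)
    (hpos : ∀ k, 0 < lam k) (hmono : Monotone lam)
    (htop : Filter.Tendsto lam Filter.atTop Filter.atTop)
    (E : ℝ → H → H)
    (hE : ∀ t v, E t v = ∑' k, (Real.exp (-t * lam k) * ⟪e k, v⟫) • e k)
    (η : ℝ) (hη0 : 0 ≤ η) (hη : η ≤ 1 / 2) :
    ∃ C : ℝ, 0 < C ∧ ∀ s t : ℝ, 0 ≤ s → s ≤ t → ∀ v : H,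
      Summable (fun k => lam k ^ (-(2 * η)) * ⟪e k, v⟫ ^ 2) →
      ∫ σ in (0 : ℝ)..s, ‖E (t - σ) v - E (s - σ) v‖ ^ 2
        ≤ C * (t - s) ^ (1 - 2 * η) * ∑' k, lam k ^ (-(2 * η)) * ⟪e k, v⟫ ^ 2 :=
  stochastic_convolution_I2_general e lam hpos E hE η hη0 hη
end

section
/- Let H, (e_k), (λ_k), R be as in the context, let f : H → H be Lipschitz with constant L_f, and let τ > 0 with τ L_f ≤ 1/2. Let N ≥ 1, T = Nτ, and let (v^n)_{n=0}^N, (v̄^n)_{n=0}^N, (w^n)_{n=1}^N, (w_J^n)_{n=1}^N be elements of H satisfying v̄^0 = v^0 and, for 1 ≤ n ≤ N, v^n = R(τ)(v^{n−1} + τ f(v^n + w^n)) and v̄^n = R(τ)(v̄^{n−1} + τ f(v̄^n + w_J^n)). Then max_{1 ≤ n ≤ N} ‖v̄^n − v^n‖ ≤ 2 L_f T e^{2 L_f T} · max_{1 ≤ n ≤ N} ‖w_J^n − w^n‖. -/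
set_option maxHeartbeats 1000000


open scoped RealInnerProductSpace

/-- Pathwise content of Lemma 8 (Section 5): if `τ L_f ≤ 1/2`, `T = Nτ`, and
`vⁿ = R(τ)(vⁿ⁻¹ + τ f(vⁿ + wⁿ))`, `v̄ⁿ = R(τ)(v̄ⁿ⁻¹ + τ f(v̄ⁿ + w_Jⁿ))` with `v̄⁰ = v⁰`,
then `max_{1≤n≤N} ‖v̄ⁿ − vⁿ‖ ≤ 2 L_f T e^{2 L_f T} max_{1≤n≤N} ‖w_Jⁿ − wⁿ‖`. -/
theorem nonlinear_random_perturbation {H : Type*} [NormedAddCommGroup H]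
    [InnerProductSpace ℝ H] [CompleteSpace H]
    (e : HilbertBasis ℕ ℝ H) (lam : ℕ → ℝ)
    (hpos : ∀ k, 0 < lam k) (hmono : Monotone lam)
    (htop : Filter.Tendsto lam Filter.atTop Filter.atTop)
    (R : ℝ → H → H)
    (hR : ∀ τ v, R τ v = ∑' k, ((1 + τ * lam k)⁻¹ * ⟪e k, v⟫) • e k)
    (f : H → H) (Lf : ℝ) (hLf : 0 ≤ Lf)
    (hf : ∀ a b, ‖f a - f b‖ ≤ Lf * ‖a - b‖)
    (τ : ℝ) (hτ : 0 < τ) (hτLf : τ * Lf ≤ 1 / 2)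
    (N : ℕ) (hN : 1 ≤ N) (T : ℝ) (hT : T = N * τ)
    (v vbar w wJ : ℕ → H)
    (h0 : vbar 0 = v 0)
    (hv : ∀ n, 1 ≤ n → n ≤ N → v n = R τ (v (n - 1) + τ • f (v n + w n)))
    (hvbar : ∀ n, 1 ≤ n → n ≤ N → vbar n = R τ (vbar (n - 1) + τ • f (vbar n + wJ n))) :
    (Finset.Icc 1 N).sup' (Finset.nonempty_Icc.mpr hN) (fun n => ‖vbar n - v n‖)
      ≤ 2 * Lf * T * Real.exp (2 * Lf * T) *
        (Finset.Icc 1 N).sup' (Finset.nonempty_Icc.mpr hN) (fun n => ‖wJ n - w n‖) := by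
  classical
  -- the multiplier sequence
  set c : ℕ → ℝ := fun k => (1 + τ * lam k)⁻¹ with hc_def
  have hc0 : ∀ k, 0 < c k := fun k =>
    inv_pos.mpr (by nlinarith [hpos k, mul_pos hτ (hpos k)])
  have hc1 : ∀ k, c k ≤ 1 := fun k => by
    rw [hc_def]
    have : (1:ℝ) ≤ 1 + τ * lam k := by nlinarith [mul_pos hτ (hpos k)]
    exact inv_le_one_of_one_le₀ this
  have htwo : (0:ℝ) < (2 : ENNReal).toReal := by norm_num
  -- membership in ℓ²
  have hmem : ∀ x : H, Memℓp (fun k => c k * e.repr x k) 2 := by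
    intro x
    apply memℓp_gen
    have hs : Summable fun k => ‖e.repr x k‖ ^ (2 : ENNReal).toReal :=
      (lp.memℓp (e.repr x)).summable htwo
    refine Summable.of_nonneg_of_le (fun k => ?_) (fun k => ?_) hs
    · positivity
    · apply Real.rpow_le_rpow (norm_nonneg _) _ htwo.le
      calc ‖c k * e.repr x k‖ = c k * ‖e.repr x k‖ := by
            rw [norm_mul, Real.norm_of_nonneg (hc0 k).le]
        _ ≤ 1 * ‖e.repr x k‖ := by
            exact mul_le_mul_of_nonneg_right (hc1 k) (norm_nonneg _)
        _ = ‖e.repr x k‖ := one_mul _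
  set S : H → lp (fun _ : ℕ => ℝ) 2 := fun x => ⟨fun k => c k * e.repr x k, hmem x⟩ with hS_def
  have hScoe : ∀ x k, (S x : ℕ → ℝ) k = c k * e.repr x k := fun x k => rfl
  -- identification of R with the lp picture
  have hRS : ∀ x : H, R τ x = e.repr.symm (S x) := by
    intro x
    rw [hR]
    have hsum : HasSum (fun k => (S x : ℕ → ℝ) k • e k) (e.repr.symm (S x)) :=
      e.hasSum_repr_symm (S x)
    have : (fun k => ((1 + τ * lam k)⁻¹ * ⟪e k, x⟫) • e k)
        = fun k => (S x : ℕ → ℝ) k • e k := by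
      funext k
      rw [hScoe, e.repr_apply_apply]
    rw [this, hsum.tsum_eq]
  -- contraction in norm
  have hnorm : ∀ x : H, ‖R τ x‖ ≤ ‖x‖ := by
    intro x
    rw [hRS, LinearIsometryEquiv.norm_map]
    have hx : ‖x‖ = ‖e.repr x‖ := (LinearIsometryEquiv.norm_map e.repr x).symm
    rw [hx]
    refine lp.norm_le_of_forall_sum_le htwo (norm_nonneg _) (fun s => ?_)
    calc ∑ i ∈ s, ‖(S x : ℕ → ℝ) i‖ ^ (2 : ENNReal).toReal
        ≤ ∑ i ∈ s, ‖e.repr x i‖ ^ (2 : ENNReal).toReal := by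
          refine Finset.sum_le_sum (fun i _ => ?_)
          apply Real.rpow_le_rpow (norm_nonneg _) _ htwo.le
          rw [hScoe, norm_mul, Real.norm_of_nonneg (hc0 i).le]
          calc c i * ‖e.repr x i‖ ≤ 1 * ‖e.repr x i‖ :=
                mul_le_mul_of_nonneg_right (hc1 i) (norm_nonneg _)
            _ = ‖e.repr x i‖ := one_mul _
      _ ≤ ‖e.repr x‖ ^ (2 : ENNReal).toReal := lp.sum_rpow_le_norm_rpow htwo _ s
  -- additivity of differences
  have hsub : ∀ x y : H, R τ x - R τ y = R τ (x - y) := by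
    intro x y
    rw [hRS x, hRS y, hRS (x - y), ← map_sub]
    congr 1
    apply Subtype.ext
    funext k
    have h1 : ((S x - S y : lp (fun _ : ℕ => ℝ) 2) : ℕ → ℝ) k
        = (S x : ℕ → ℝ) k - (S y : ℕ → ℝ) k := by
      rw [lp.coeFn_sub]; rfl
    rw [h1, hScoe, hScoe, hScoe, map_sub]
    simp [mul_sub]
  have hcontr : ∀ x y : H, ‖R τ x - R τ y‖ ≤ ‖x - y‖ := by
    intro x y; rw [hsub]; exact hnorm _
  -- Gronwall setup
  have hτLf0 : (0:ℝ) ≤ τ * Lf := mul_nonneg hτ.le hLf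
  have hden : (0:ℝ) < 1 - τ * Lf := by linarith
  set q : ℝ := (1 - τ * Lf)⁻¹ with hq_def
  have hq0 : 0 < q := inv_pos.mpr hden
  have hqmul : q * (1 - τ * Lf) = 1 := inv_mul_cancel₀ hden.ne'
  have hq1 : 1 ≤ q := by nlinarith
  have hqexp : q ≤ Real.exp (2 * (τ * Lf)) := by
    have h1 : q ≤ 1 + 2 * (τ * Lf) := by nlinarith
    have h2 : 2 * (τ * Lf) + 1 ≤ Real.exp (2 * (τ * Lf)) := Real.add_one_le_exp _
    linarith
  set M : ℝ := (Finset.Icc 1 N).sup' (Finset.nonempty_Icc.mpr hN) (fun n => ‖wJ n - w n‖)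
    with hM_def
  have h1mem : (1 : ℕ) ∈ Finset.Icc 1 N := Finset.mem_Icc.mpr ⟨le_rfl, hN⟩
  have hM0 : 0 ≤ M := le_trans (norm_nonneg (wJ 1 - w 1))
    (Finset.le_sup' (fun n => ‖wJ n - w n‖) h1mem)
  have hεM : ∀ n, 1 ≤ n → n ≤ N → ‖wJ n - w n‖ ≤ M := fun n h1 h2 =>
    Finset.le_sup' (fun n => ‖wJ n - w n‖) (Finset.mem_Icc.mpr ⟨h1, h2⟩)
  -- one-step recurrence
  have hrec : ∀ n, 1 ≤ n → n ≤ N →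
      ‖vbar n - v n‖ ≤ q * (‖vbar (n-1) - v (n-1)‖ + τ * Lf * M) := by
    intro n h1 h2
    have hd : vbar n - v n
        = R τ ((vbar (n-1) + τ • f (vbar n + wJ n)) - (v (n-1) + τ • f (v n + w n))) := by
      conv_lhs => rw [hvbar n h1 h2, hv n h1 h2]
      exact hsub _ _
    have hstep : ‖vbar n - v n‖
        ≤ ‖vbar (n-1) - v (n-1)‖ + τ * ‖f (vbar n + wJ n) - f (v n + w n)‖ := by
      rw [hd]
      refine le_trans (hnorm _) ?_
      have : (vbar (n-1) + τ • f (vbar n + wJ n)) - (v (n-1) + τ • f (v n + w n))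
          = (vbar (n-1) - v (n-1)) + τ • (f (vbar n + wJ n) - f (v n + w n)) := by
        rw [smul_sub]; abel
      rw [this]
      refine le_trans (norm_add_le _ _) ?_
      rw [norm_smul, Real.norm_of_nonneg hτ.le]
    have hΔf : ‖f (vbar n + wJ n) - f (v n + w n)‖
        ≤ Lf * (‖vbar n - v n‖ + ‖wJ n - w n‖) := by
      refine le_trans (hf _ _) ?_
      have : (vbar n + wJ n) - (v n + w n) = (vbar n - v n) + (wJ n - w n) := by abel
      rw [this]
      exact mul_le_mul_of_nonneg_left (norm_add_le _ _) hLf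
    have hε : ‖wJ n - w n‖ ≤ M := hεM n h1 h2
    have key : (1 - τ * Lf) * ‖vbar n - v n‖ ≤ ‖vbar (n-1) - v (n-1)‖ + τ * Lf * M := by
      nlinarith [mul_le_mul_of_nonneg_left hΔf hτ.le,
        mul_le_mul_of_nonneg_left hε (mul_nonneg hτ.le hLf)]
    calc ‖vbar n - v n‖ = q * ((1 - τ * Lf) * ‖vbar n - v n‖) := by
          rw [← mul_assoc, hqmul, one_mul]
      _ ≤ q * (‖vbar (n-1) - v (n-1)‖ + τ * Lf * M) :=
          mul_le_mul_of_nonneg_left key hq0.le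
  -- discrete Gronwall inequality
  have claim : ∀ n, n ≤ N → ‖vbar n - v n‖ ≤ (n : ℝ) * (τ * Lf) * q ^ n * M := by
    intro n
    induction n with
    | zero => intro _; simp [h0]
    | succ n ih =>
      intro hn
      have ihn := ih (le_trans (Nat.le_succ n) hn)
      have hd := hrec (n+1) (Nat.le_add_left 1 n) hn
      simp only [Nat.add_sub_cancel] at hd
      have hqpow : q ≤ q ^ (n+1) := by
        calc q = q ^ 1 := (pow_one q).symm
          _ ≤ q ^ (n+1) := pow_le_pow_right₀ hq1 (by omega)
      have hqn : q ^ (n+1) = q * q ^ n := by ring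
      have hqn0 : (0:ℝ) ≤ q ^ n := (pow_pos hq0 n).le
      calc ‖vbar (n+1) - v (n+1)‖
          ≤ q * (‖vbar n - v n‖ + τ * Lf * M) := hd
        _ ≤ q * ((n : ℝ) * (τ * Lf) * q ^ n * M + τ * Lf * M) := by
            refine mul_le_mul_of_nonneg_left (by linarith) hq0.le
        _ = (n : ℝ) * (τ * Lf) * q ^ (n+1) * M + q * (τ * Lf * M) := by
            rw [hqn]; ring
        _ ≤ (n : ℝ) * (τ * Lf) * q ^ (n+1) * M + q ^ (n+1) * (τ * Lf * M) := by
            have : q * (τ * Lf * M) ≤ q ^ (n+1) * (τ * Lf * M) :=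
              mul_le_mul_of_nonneg_right hqpow (mul_nonneg hτLf0 hM0)
            linarith
        _ = ((n+1 : ℕ) : ℝ) * (τ * Lf) * q ^ (n+1) * M := by
            push_cast; ring
  -- conclude
  have hT0 : 0 ≤ T := by rw [hT]; positivity
  refine Finset.sup'_le _ _ (fun n hn => ?_)
  obtain ⟨hn1, hn2⟩ := Finset.mem_Icc.mp hn
  have hcast : (n : ℝ) ≤ (N : ℝ) := Nat.cast_le.mpr hn2
  have hA : (n : ℝ) * (τ * Lf) ≤ Lf * T := by
    rw [hT]
    nlinarith
  have hB : q ^ n ≤ Real.exp (2 * Lf * T) := by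
    calc q ^ n ≤ (Real.exp (2 * (τ * Lf))) ^ n := pow_le_pow_left₀ hq0.le hqexp n
      _ = Real.exp ((n : ℝ) * (2 * (τ * Lf))) := (Real.exp_nat_mul _ n).symm
      _ ≤ Real.exp (2 * Lf * T) := by
          apply Real.exp_le_exp.mpr
          rw [hT]
          nlinarith
  have hB0 : (0:ℝ) ≤ q ^ n := (pow_pos hq0 n).le
  have hLT0 : 0 ≤ Lf * T := mul_nonneg hLf hT0
  calc ‖vbar n - v n‖ ≤ (n : ℝ) * (τ * Lf) * q ^ n * M := claim n hn2
    _ ≤ (Lf * T) * Real.exp (2 * Lf * T) * M := by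
        refine mul_le_mul_of_nonneg_right ?_ hM0
        exact mul_le_mul hA hB hB0 hLT0
    _ ≤ 2 * Lf * T * Real.exp (2 * Lf * T) * M := by
        nlinarith [Real.exp_pos (2 * Lf * T), mul_nonneg hLT0 (Real.exp_pos (2*Lf*T)).le,
          mul_nonneg (mul_nonneg hLT0 (Real.exp_pos (2*Lf*T)).le) hM0]
end
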